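/- arXiv:1503.08382 — 13 statements merged into one kernel-verified Lean document; each statement's English description precedes it below -/
import Mathlib

section
/- For fixed k1, k2, μ > 0, the function f(ρ) = sqrt(k1/ρ² + k2²ρ/μ), defined for ρ > 0, satisfies: the derivative of λi along the corresponding right eigenvector equals 3k2²ρ / (2μ sqrt(k1/ρ² + k2²ρ/μ)), which is strictly positive for all ρ > 0; hence both characteristic fields are genuinely nonlinear. -/
/-- Genuine nonlinearity of both characteristic fields: with f(ρ) = √(k1/ρ² + k2²ρ/μ),
    λ1 = u - f(ρ), r1 = (-ρ, f(ρ)) and λ2 = u + f(ρ), r2 = (ρ, f(ρ)), the directional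
    derivative ∇λi · ri = ρ f'(ρ) + f(ρ) equals 3k2²ρ/(2μ √(k1/ρ² + k2²ρ/μ)) > 0. -/
theorem genuine_nonlinearity (k1 k2 μ : ℝ) (hk1 : 0 < k1) (hk2 : 0 < k2) (hμ : 0 < μ)
    (f : ℝ → ℝ) (hf : ∀ ρ > 0, f ρ = Real.sqrt (k1 / ρ ^ 2 + k2 ^ 2 * ρ / μ))
    (ρ : ℝ) (hρ : 0 < ρ) (f' : ℝ) (hf' : HasDerivAt f f' ρ) :
    ρ * f' + f ρ = 3 * k2 ^ 2 * ρ / (2 * μ * Real.sqrt (k1 / ρ ^ 2 + k2 ^ 2 * ρ / μ)) ∧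
    0 < 3 * k2 ^ 2 * ρ / (2 * μ * Real.sqrt (k1 / ρ ^ 2 + k2 ^ 2 * ρ / μ)) := by
  set u : ℝ := k1 / ρ ^ 2 + k2 ^ 2 * ρ / μ with hu
  have hρ' : ρ ≠ 0 := ne_of_gt hρ
  have hμ' : μ ≠ 0 := ne_of_gt hμ
  have hupos : 0 < u := by
    apply add_pos
    · positivity
    · positivity
  have hsq : 0 < Real.sqrt u := Real.sqrt_pos.mpr hupos
  have hsq' : Real.sqrt u ≠ 0 := ne_of_gt hsq
  -- derivative of the inner function h(x) = k1/x² + k2²x/μ at ρ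
  have hh : HasDerivAt (fun x : ℝ => k1 / x ^ 2 + k2 ^ 2 * x / μ)
      (-(k1 * (2 * ρ)) / (ρ ^ 2) ^ 2 + k2 ^ 2 / μ) ρ := by
    have h1 : HasDerivAt (fun x : ℝ => k1 / x ^ 2)
        ((0 * ρ ^ 2 - k1 * (2 * ρ ^ 1)) / (ρ ^ 2) ^ 2) ρ :=
      (hasDerivAt_const ρ k1).div (hasDerivAt_pow 2 ρ) (by positivity)
    have h2 : HasDerivAt (fun x : ℝ => k2 ^ 2 * x / μ) (k2 ^ 2 / μ) ρ := by
      have := (hasDerivAt_id ρ).const_mul (k2 ^ 2)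
      simpa [mul_div_assoc] using this.div_const μ
    have := h1.add h2
    exact this.congr_deriv (by ring)
  -- derivative of g = sqrt ∘ h
  have hg : HasDerivAt (fun x : ℝ => Real.sqrt (k1 / x ^ 2 + k2 ^ 2 * x / μ))
      ((-(k1 * (2 * ρ)) / (ρ ^ 2) ^ 2 + k2 ^ 2 / μ) / (2 * Real.sqrt u)) ρ := by
    exact hh.sqrt (ne_of_gt hupos)
  -- f equals g near ρ
  have heq : f =ᶠ[nhds ρ] fun x : ℝ => Real.sqrt (k1 / x ^ 2 + k2 ^ 2 * x / μ) := by
    filter_upwards [eventually_gt_nhds hρ] with x hx using hf x hx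
  have hfg : HasDerivAt (fun x : ℝ => Real.sqrt (k1 / x ^ 2 + k2 ^ 2 * x / μ)) f' ρ :=
    hf'.congr_of_eventuallyEq heq.symm
  have hf'eq : f' = (-(k1 * (2 * ρ)) / (ρ ^ 2) ^ 2 + k2 ^ 2 / μ) / (2 * Real.sqrt u) :=
    hfg.unique hg
  have hval : f ρ = Real.sqrt u := hf ρ hρ
  have hsqu : Real.sqrt u * Real.sqrt u = u := Real.mul_self_sqrt hupos.le
  constructor
  · rw [hval, hf'eq]
    set s := Real.sqrt u with hs
    rw [hu] at hsqu
    have hsqu2 : s * s * (ρ ^ 2 * μ) = k1 * μ + k2 ^ 2 * ρ ^ 3 := by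
      rw [hsqu]; field_simp
    field_simp
    linear_combination 2 * hsqu2
  · positivity
end

section
/- The 1-rarefaction curve u(ρ) = u₋ - ∫_{ρ₋}^{ρ} sqrt(k1/s² + k2²s/μ)/s ds, for 0 < ρ < ρ₋, is strictly decreasing and strictly convex in ρ: u'(ρ) = -sqrt(k1/ρ² + k2²ρ/μ)/ρ < 0 and u''(ρ) = (4k1/ρ² + k2²ρ/μ) / (2ρ² sqrt(k1/ρ² + k2²ρ/μ)) > 0. -/
open intervalIntegral

/-- The 1-rarefaction curve u(ρ) = u₋ - ∫_{ρ₋}^{ρ} √(k1/s² + k2²s/μ)/s ds is strictly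
    decreasing and strictly convex on (0, ρ₋):
    u'(ρ) = -√(k1/ρ² + k2²ρ/μ)/ρ < 0 and
    u''(ρ) = (4k1/ρ² + k2²ρ/μ)/(2ρ²√(k1/ρ² + k2²ρ/μ)) > 0. -/
theorem one_rarefaction_decreasing_convex (k1 k2 μ ρm um : ℝ)
    (hk1 : 0 < k1) (hk2 : 0 < k2) (hμ : 0 < μ) (hρm : 0 < ρm)
    (u : ℝ → ℝ)
    (hu : ∀ ρ, 0 < ρ →
      u ρ = um - ∫ s in ρm..ρ, Real.sqrt (k1 / s ^ 2 + k2 ^ 2 * s / μ) / s) :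
    ∀ ρ, 0 < ρ → ρ < ρm →
      (HasDerivAt u (-(Real.sqrt (k1 / ρ ^ 2 + k2 ^ 2 * ρ / μ) / ρ)) ρ ∧
        -(Real.sqrt (k1 / ρ ^ 2 + k2 ^ 2 * ρ / μ) / ρ) < 0) ∧
      (HasDerivAt (fun r => -(Real.sqrt (k1 / r ^ 2 + k2 ^ 2 * r / μ) / r))
          ((4 * k1 / ρ ^ 2 + k2 ^ 2 * ρ / μ) /
            (2 * ρ ^ 2 * Real.sqrt (k1 / ρ ^ 2 + k2 ^ 2 * ρ / μ))) ρ ∧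
        0 < (4 * k1 / ρ ^ 2 + k2 ^ 2 * ρ / μ) /
            (2 * ρ ^ 2 * Real.sqrt (k1 / ρ ^ 2 + k2 ^ 2 * ρ / μ))) := by
  intro ρ hρ hρlt
  set f : ℝ → ℝ := fun s => Real.sqrt (k1 / s ^ 2 + k2 ^ 2 * s / μ) / s with hf
  have hA : 0 < k1 / ρ ^ 2 + k2 ^ 2 * ρ / μ := by positivity
  have hsq : 0 < Real.sqrt (k1 / ρ ^ 2 + k2 ^ 2 * ρ / μ) := Real.sqrt_pos.mpr hA
  have hρ0 : ρ ≠ 0 := ne_of_gt hρ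
  have hcontOn : ContinuousOn f (Set.Ioi (0 : ℝ)) := by
    intro s hs
    have hs0 : s ≠ 0 := ne_of_gt hs
    apply ContinuousWithinAt.div
    · apply ContinuousWithinAt.sqrt
      apply ContinuousWithinAt.add
      · exact (continuousWithinAt_const.div (continuousWithinAt_id.pow 2)
          (pow_ne_zero 2 hs0))
      · exact ((continuousWithinAt_const.mul continuousWithinAt_id).div
          continuousWithinAt_const (ne_of_gt hμ))
    · exact continuousWithinAt_id
    · exact hs0
  -- first derivative
  have hint : IntervalIntegrable f MeasureTheory.volume ρm ρ := by
    apply ContinuousOn.intervalIntegrable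
    apply hcontOn.mono
    intro x hx
    rcases Set.mem_uIcc.mp hx with h | h
    · exact lt_of_lt_of_le hρm h.1
    · exact lt_of_lt_of_le hρ h.1
  have hcρ : ContinuousAt f ρ :=
    (hcontOn.continuousAt (Ioi_mem_nhds hρ))
  have hmeas : StronglyMeasurableAtFilter f (nhds ρ) :=
    hcontOn.stronglyMeasurableAtFilter isOpen_Ioi _ hρ
  have hF : HasDerivAt (fun x => um - ∫ s in ρm..x, f s) (-(f ρ)) ρ := by
    have := intervalIntegral.integral_hasDerivAt_right hint hmeas hcρ
    have h2 := (hasDerivAt_const ρ um).sub this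
    rwa [zero_sub] at h2
  have hEq : u =ᶠ[nhds ρ] fun x => um - ∫ s in ρm..x, f s := by
    filter_upwards [Ioi_mem_nhds hρ] with x hx
    exact hu x hx
  have h1 : HasDerivAt u (-(Real.sqrt (k1 / ρ ^ 2 + k2 ^ 2 * ρ / μ) / ρ)) ρ :=
    hF.congr_of_eventuallyEq hEq
  refine ⟨⟨h1, neg_lt_zero.mpr (by positivity)⟩, ?_, by positivity⟩
  -- second derivative
  have hd1 : HasDerivAt (fun r : ℝ => k1 / r ^ 2)
      ((0 * ρ ^ 2 - k1 * ((2 : ℕ) * ρ ^ (2 - 1))) / (ρ ^ 2) ^ 2) ρ :=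
    (hasDerivAt_const ρ k1).div (hasDerivAt_pow 2 ρ) (pow_ne_zero 2 hρ0)
  have hd2 : HasDerivAt (fun r : ℝ => k2 ^ 2 * r / μ) (k2 ^ 2 / μ) ρ := by
    simpa using ((hasDerivAt_id ρ).const_mul (k2 ^ 2)).div_const μ
  have hAderiv := hd1.add hd2
  have hsqrt := hAderiv.sqrt (ne_of_gt hA)
  have hdiv := (hsqrt.div (hasDerivAt_id ρ) hρ0).neg
  convert hdiv using 1
  · rfl
  · rfl
  · funext r; rfl
  simp only [Pi.add_apply, id]
  set S := Real.sqrt (k1 / ρ ^ 2 + k2 ^ 2 * ρ / μ) with hSdef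
  have hmul : S * S = k1 / ρ ^ 2 + k2 ^ 2 * ρ / μ := Real.mul_self_sqrt hA.le
  have hS0 : S ≠ 0 := ne_of_gt hsq
  have hmul' : S * S * (ρ ^ 2 * μ) = k1 * μ + k2 ^ 2 * ρ * ρ ^ 2 := by
    field_simp at hmul; linarith [hmul]
  push_cast
  field_simp
  linear_combination (-2) * hmul'
end

section
/- Along the 2-rarefaction curve u(ρ) = u₋ + ∫_{ρ₋}^{ρ} sqrt(k1/s² + k2²s/μ)/s ds (ρ > ρ₋), one has u'(ρ) > 0, u''(ρ) < 0, and u(ρ) → +∞ as ρ → +∞. -/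
open Filter intervalIntegral

lemma aux_cont (k1 k2 μ : ℝ) :
    ContinuousOn (fun s => Real.sqrt (k1 / s ^ 2 + k2 ^ 2 * s / μ) / s) (Set.Ioi 0) := by
  apply ContinuousOn.div _ continuousOn_id (fun x hx => ne_of_gt hx)
  apply ContinuousOn.sqrt
  apply ContinuousOn.add
  · exact continuousOn_const.div (continuousOn_pow 2)
      (fun x hx => pow_ne_zero 2 (ne_of_gt hx))
  · exact (continuousOn_const.mul continuousOn_id).div_const μ

lemma aux_deriv2 (k1 k2 μ : ℝ) (hk1 : 0 < k1) (hk2 : 0 < k2) (hμ : 0 < μ) (ρ : ℝ) (hρ : 0 < ρ) :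
    HasDerivAt (fun r => Real.sqrt (k1 / r ^ 2 + k2 ^ 2 * r / μ) / r)
      (-((4 * k1 / ρ ^ 2 + k2 ^ 2 * ρ / μ) /
        (2 * ρ ^ 2 * Real.sqrt (k1 / ρ ^ 2 + k2 ^ 2 * ρ / μ)))) ρ := by
  have hρ0 : ρ ≠ 0 := ne_of_gt hρ
  have hpos : 0 < k1 / ρ ^ 2 + k2 ^ 2 * ρ / μ := by positivity
  have hsqpos : 0 < Real.sqrt (k1 / ρ ^ 2 + k2 ^ 2 * ρ / μ) := Real.sqrt_pos.mpr hpos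
  have h1 : HasDerivAt (fun r : ℝ => k1 / r ^ 2 + k2 ^ 2 * r / μ)
      (-(2 * k1 / ρ ^ 3) + k2 ^ 2 / μ) ρ := by
    have ha : HasDerivAt (fun r : ℝ => k1 / r ^ 2) (-(2 * k1 / ρ ^ 3)) ρ := by
      have h := (hasDerivAt_const ρ k1).div (hasDerivAt_pow 2 ρ) (pow_ne_zero 2 hρ0)
      refine h.congr_deriv ?_
      field_simp
      ring
    have hb : HasDerivAt (fun r : ℝ => k2 ^ 2 * r / μ) (k2 ^ 2 / μ) ρ := by
      simpa using ((hasDerivAt_id ρ).const_mul (k2 ^ 2)).div_const μ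
    exact ha.add hb
  have h2 := h1.sqrt (ne_of_gt hpos)
  have h3 := h2.div (hasDerivAt_id ρ) hρ0
  refine h3.congr_deriv ?_
  have hs : Real.sqrt (k1 / ρ ^ 2 + k2 ^ 2 * ρ / μ) ^ 2 = k1 / ρ ^ 2 + k2 ^ 2 * ρ / μ :=
    Real.sq_sqrt hpos.le
  set S := Real.sqrt (k1 / ρ ^ 2 + k2 ^ 2 * ρ / μ)
  have hs' : S ^ 2 * (ρ ^ 2 * μ) = k1 * μ + k2 ^ 2 * ρ * ρ ^ 2 := by
    rw [hs]; field_simp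
  simp only [id]
  field_simp
  linear_combination (-2) * hs'

/-- The 2-rarefaction curve u(ρ) = u₋ + ∫_{ρ₋}^{ρ} √(k1/s² + k2²s/μ)/s ds (ρ > ρ₋)
    satisfies u'(ρ) > 0, u''(ρ) < 0 and u(ρ) → +∞ as ρ → +∞. -/
theorem two_rarefaction_properties (k1 k2 μ ρm um : ℝ)
    (hk1 : 0 < k1) (hk2 : 0 < k2) (hμ : 0 < μ) (hρm : 0 < ρm)
    (u : ℝ → ℝ)
    (hu : ∀ ρ, 0 < ρ →
      u ρ = um + ∫ s in ρm..ρ, Real.sqrt (k1 / s ^ 2 + k2 ^ 2 * s / μ) / s) :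
    (∀ ρ, ρm < ρ →
      (HasDerivAt u (Real.sqrt (k1 / ρ ^ 2 + k2 ^ 2 * ρ / μ) / ρ) ρ ∧
        0 < Real.sqrt (k1 / ρ ^ 2 + k2 ^ 2 * ρ / μ) / ρ) ∧
      (HasDerivAt (fun r => Real.sqrt (k1 / r ^ 2 + k2 ^ 2 * r / μ) / r)
          (-((4 * k1 / ρ ^ 2 + k2 ^ 2 * ρ / μ) /
            (2 * ρ ^ 2 * Real.sqrt (k1 / ρ ^ 2 + k2 ^ 2 * ρ / μ)))) ρ ∧
        -((4 * k1 / ρ ^ 2 + k2 ^ 2 * ρ / μ) /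
            (2 * ρ ^ 2 * Real.sqrt (k1 / ρ ^ 2 + k2 ^ 2 * ρ / μ))) < 0)) ∧
    Tendsto u atTop atTop := by
  set f : ℝ → ℝ := fun s => Real.sqrt (k1 / s ^ 2 + k2 ^ 2 * s / μ) / s with hfdef
  have hcont := aux_cont k1 k2 μ
  constructor
  · intro ρ hρ
    have hρ0 : 0 < ρ := hρm.trans hρ
    have hpos : 0 < k1 / ρ ^ 2 + k2 ^ 2 * ρ / μ := by positivity
    refine ⟨⟨?_, ?_⟩, aux_deriv2 k1 k2 μ hk1 hk2 hμ ρ hρ0, ?_⟩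
    · -- first derivative
      have hint : IntervalIntegrable f MeasureTheory.volume ρm ρ := by
        apply ContinuousOn.intervalIntegrable
        apply hcont.mono
        rw [Set.uIcc_of_le hρ.le]
        exact fun x hx => lt_of_lt_of_le hρm hx.1
      have h1 : HasDerivAt (fun r => ∫ s in ρm..r, f s) (f ρ) ρ :=
        intervalIntegral.integral_hasDerivAt_right hint
          (hcont.stronglyMeasurableAtFilter isOpen_Ioi ρ hρ0)
          (hcont.continuousAt (isOpen_Ioi.mem_nhds hρ0))
      have h2 : HasDerivAt (fun r => um + ∫ s in ρm..r, f s) (f ρ) ρ := h1.const_add um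
      apply h2.congr_of_eventuallyEq
      filter_upwards [Ioi_mem_nhds hρ0] with r hr
      exact hu r hr
    · positivity
    · have : 0 < (4 * k1 / ρ ^ 2 + k2 ^ 2 * ρ / μ) /
          (2 * ρ ^ 2 * Real.sqrt (k1 / ρ ^ 2 + k2 ^ 2 * ρ / μ)) := by positivity
      linarith
  · -- tendsto atTop
    have hlow : ∀ ρ, ρm ≤ ρ →
        um + 2 * (k2 / Real.sqrt μ) * (Real.sqrt ρ - Real.sqrt ρm) ≤ u ρ := by
      intro ρ hρ
      have hρ0 : 0 < ρ := lt_of_lt_of_le hρm hρ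
      rw [hu ρ hρ0]
      have hμs : (0:ℝ) < Real.sqrt μ := Real.sqrt_pos.mpr hμ
      have hintf : IntervalIntegrable f MeasureTheory.volume ρm ρ := by
        apply ContinuousOn.intervalIntegrable
        apply hcont.mono
        rw [Set.uIcc_of_le hρ]
        exact fun x hx => lt_of_lt_of_le hρm hx.1
      have hg : ∀ s ∈ Set.Icc ρm ρ, k2 / Real.sqrt μ / Real.sqrt s ≤ f s := by
        intro s hs
        have hs0 : 0 < s := lt_of_lt_of_le hρm hs.1
        have hss : (0:ℝ) < Real.sqrt s := Real.sqrt_pos.mpr hs0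
        have key : Real.sqrt (k2 ^ 2 * s / μ) = k2 / Real.sqrt μ / Real.sqrt s * s := by
          rw [show k2 ^ 2 * s / μ = (k2 / Real.sqrt μ / Real.sqrt s * s) ^ 2 by
            have h1 : Real.sqrt s ^ 2 = s := Real.sq_sqrt hs0.le
            have h2 : Real.sqrt μ ^ 2 = μ := Real.sq_sqrt hμ.le
            field_simp
            linear_combination (Real.sqrt s ^ 2) * h2 + μ * h1]
          exact Real.sqrt_sq (by positivity)
        have hmono : Real.sqrt (k2 ^ 2 * s / μ) ≤
            Real.sqrt (k1 / s ^ 2 + k2 ^ 2 * s / μ) := by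
          apply Real.sqrt_le_sqrt
          have : 0 < k1 / s ^ 2 := by positivity
          linarith
        calc k2 / Real.sqrt μ / Real.sqrt s
            = Real.sqrt (k2 ^ 2 * s / μ) / s := by rw [key]; field_simp
          _ ≤ f s := div_le_div_of_nonneg_right hmono hs0.le
      have hintg : IntervalIntegrable (fun s => k2 / Real.sqrt μ / Real.sqrt s)
          MeasureTheory.volume ρm ρ := by
        apply ContinuousOn.intervalIntegrable
        intro x hx
        rw [Set.uIcc_of_le hρ] at hx
        have hx0 : 0 < x := lt_of_lt_of_le hρm hx.1
        exact (continuousOn_const.div (Real.continuous_sqrt.continuousOn)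
          (fun y hy => by
            rw [Set.uIcc_of_le hρ] at hy
            exact ne_of_gt (Real.sqrt_pos.mpr (lt_of_lt_of_le hρm hy.1)))) x
            (by rw [Set.uIcc_of_le hρ]; exact hx)
      have hgint : (∫ s in ρm..ρ, k2 / Real.sqrt μ / Real.sqrt s)
          = 2 * (k2 / Real.sqrt μ) * (Real.sqrt ρ - Real.sqrt ρm) := by
        have hF : ∀ x ∈ Set.uIcc ρm ρ,
            HasDerivAt (fun y => 2 * (k2 / Real.sqrt μ) * Real.sqrt y)
              (k2 / Real.sqrt μ / Real.sqrt x) x := by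
          intro x hx
          rw [Set.uIcc_of_le hρ] at hx
          have hx0 : 0 < x := lt_of_lt_of_le hρm hx.1
          have := (Real.hasDerivAt_sqrt (ne_of_gt hx0)).const_mul (2 * (k2 / Real.sqrt μ))
          refine this.congr_deriv ?_
          have : Real.sqrt x ≠ 0 := ne_of_gt (Real.sqrt_pos.mpr hx0)
          field_simp
        rw [intervalIntegral.integral_eq_sub_of_hasDerivAt hF hintg]
        ring
      have := intervalIntegral.integral_mono_on hρ hintg hintf hg
      rw [hgint] at this
      linarith
    have hφ : Tendsto (fun ρ => um + 2 * (k2 / Real.sqrt μ) * (Real.sqrt ρ - Real.sqrt ρm))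
        atTop atTop := by
      apply tendsto_atTop_add_const_left
      apply Tendsto.const_mul_atTop (by positivity)
      apply tendsto_atTop_add_const_right
      apply tendsto_atTop_atTop.mpr
      intro b
      refine ⟨b ^ 2, fun x hx => ?_⟩
      calc b ≤ |b| := le_abs_self b
        _ = Real.sqrt (b ^ 2) := (Real.sqrt_sq_eq_abs b).symm
        _ ≤ Real.sqrt x := Real.sqrt_le_sqrt hx
    apply tendsto_atTop_mono' atTop _ hφ
    filter_upwards [eventually_ge_atTop ρm] with ρ hρ
    exact hlow ρ hρ
end

section
/- The 1-shock curve u(ρ) = u₋ - sqrt( (1/(ρρ₋)) ( k1/(ρρ₋) + k2²(ρ+ρ₋)/(2μ) ) ) (ρ - ρ₋), for ρ > ρ₋, is strictly decreasing in ρ, and u(ρ) → -∞ as ρ → +∞. -/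
open Filter

set_option maxHeartbeats 1000000

/-- The 1-shock curve u(ρ) = u₋ - √((1/(ρρ₋))(k1/(ρρ₋) + k2²(ρ+ρ₋)/(2μ)))(ρ-ρ₋),
    ρ > ρ₋, is strictly decreasing, and u(ρ) → -∞ as ρ → +∞. -/
theorem one_shock_curve (k1 k2 μ ρm um : ℝ)
    (hk1 : 0 < k1) (hk2 : 0 < k2) (hμ : 0 < μ) (hρm : 0 < ρm)
    (u : ℝ → ℝ)
    (hu : ∀ ρ, u ρ = um -
      Real.sqrt ((1 / (ρ * ρm)) * (k1 / (ρ * ρm) + k2 ^ 2 * (ρ + ρm) / (2 * μ)))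
        * (ρ - ρm)) :
    StrictAntiOn u (Set.Ioi ρm) ∧ Tendsto u atTop atBot := by
  constructor
  · intro a ha b hb hab
    have ha' : ρm < a := ha
    have hb' : ρm < b := hb
    have ha0 : 0 < a := hρm.trans ha'
    have hb0 : 0 < b := hρm.trans hb'
    have hga : 0 ≤ (1 / (a * ρm)) * (k1 / (a * ρm) + k2 ^ 2 * (a + ρm) / (2 * μ)) := by
      positivity
    have hgb : 0 ≤ (1 / (b * ρm)) * (k1 / (b * ρm) + k2 ^ 2 * (b + ρm) / (2 * μ)) := by
      positivity
    rw [hu a, hu b, sub_lt_sub_iff_left]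
    have ea : Real.sqrt ((1 / (a * ρm)) * (k1 / (a * ρm) + k2 ^ 2 * (a + ρm) / (2 * μ)))
        * (a - ρm)
        = Real.sqrt ((1 / (a * ρm)) * (k1 / (a * ρm) + k2 ^ 2 * (a + ρm) / (2 * μ))
          * (a - ρm) ^ 2) := by
      rw [Real.sqrt_mul hga, Real.sqrt_sq (by linarith)]
    have eb : Real.sqrt ((1 / (b * ρm)) * (k1 / (b * ρm) + k2 ^ 2 * (b + ρm) / (2 * μ)))
        * (b - ρm)
        = Real.sqrt ((1 / (b * ρm)) * (k1 / (b * ρm) + k2 ^ 2 * (b + ρm) / (2 * μ))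
          * (b - ρm) ^ 2) := by
      rw [Real.sqrt_mul hgb, Real.sqrt_sq (by linarith)]
    rw [ea, eb]
    apply Real.sqrt_lt_sqrt (by positivity)
    have ea2 : (1 / (a * ρm)) * (k1 / (a * ρm) + k2 ^ 2 * (a + ρm) / (2 * μ)) * (a - ρm) ^ 2
        = k1 * (1 / ρm - 1 / a) ^ 2
          + k2 ^ 2 / (2 * μ * ρm) * ((a - ρm ^ 2 / a) * (a - ρm)) := by
      field_simp
      ring
    have eb2 : (1 / (b * ρm)) * (k1 / (b * ρm) + k2 ^ 2 * (b + ρm) / (2 * μ)) * (b - ρm) ^ 2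
        = k1 * (1 / ρm - 1 / b) ^ 2
          + k2 ^ 2 / (2 * μ * ρm) * ((b - ρm ^ 2 / b) * (b - ρm)) := by
      field_simp
      ring
    rw [ea2, eb2]
    have hinv : 1 / b < 1 / a := one_div_lt_one_div_of_lt ha0 hab
    have hinv2 : 1 / a < 1 / ρm := one_div_lt_one_div_of_lt hρm ha'
    have h1 : k1 * (1 / ρm - 1 / a) ^ 2 < k1 * (1 / ρm - 1 / b) ^ 2 := by
      have h0 : 0 ≤ 1 / ρm - 1 / a := by linarith
      have := pow_lt_pow_left₀ (show 1 / ρm - 1 / a < 1 / ρm - 1 / b by linarith) h0 two_ne_zero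
      exact mul_lt_mul_of_pos_left this hk1
    have hx1 : 0 < a - ρm ^ 2 / a := by
      rw [sub_pos, div_lt_iff₀ ha0]
      have := mul_lt_mul_of_pos_left ha' hρm
      nlinarith [mul_lt_mul_of_pos_right ha' hρm]
    have hx2 : a - ρm ^ 2 / a < b - ρm ^ 2 / b := by
      have : ρm ^ 2 / b < ρm ^ 2 / a := by
        apply div_lt_div_of_pos_left (by positivity) ha0 hab
      linarith
    have hx1b : 0 < b - ρm ^ 2 / b := by
      rw [sub_pos, div_lt_iff₀ hb0]
      nlinarith [mul_lt_mul_of_pos_right hb' hρm]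
    have h2 : (a - ρm ^ 2 / a) * (a - ρm) < (b - ρm ^ 2 / b) * (b - ρm) :=
      mul_lt_mul hx2 (by linarith) (by linarith) hx1b.le
    have h2' : k2 ^ 2 / (2 * μ * ρm) * ((a - ρm ^ 2 / a) * (a - ρm))
        < k2 ^ 2 / (2 * μ * ρm) * ((b - ρm ^ 2 / b) * (b - ρm)) := by
      apply mul_lt_mul_of_pos_left h2 (by positivity)
    linarith
  · set c : ℝ := k2 ^ 2 / (2 * μ * ρm) with hc
    have hc0 : 0 < c := by positivity
    have hsc : 0 < Real.sqrt c := Real.sqrt_pos.2 hc0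
    have hv : Tendsto (fun ρ : ℝ => um - Real.sqrt c * (ρ - ρm)) atTop atBot := by
      apply tendsto_atBot_add_const_left
      apply tendsto_neg_atBot_iff.mpr
      exact (tendsto_atTop_add_const_right _ (-ρm) tendsto_id).const_mul_atTop hsc
    apply tendsto_atBot_mono' atTop ?_ hv
    filter_upwards [eventually_ge_atTop ρm] with ρ hρ
    have hρ0 : 0 < ρ := lt_of_lt_of_le hρm hρ
    rw [hu ρ]
    have hgc : c ≤ (1 / (ρ * ρm)) * (k1 / (ρ * ρm) + k2 ^ 2 * (ρ + ρm) / (2 * μ)) := by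
      have hdiff : (1 / (ρ * ρm)) * (k1 / (ρ * ρm) + k2 ^ 2 * (ρ + ρm) / (2 * μ)) - c
          = k1 / (ρ ^ 2 * ρm ^ 2) + k2 ^ 2 / (2 * μ * ρ) := by
        rw [hc]; field_simp; ring
      nlinarith [div_pos hk1 (by positivity : (0:ℝ) < ρ ^ 2 * ρm ^ 2),
        div_pos (by positivity : (0:ℝ) < k2 ^ 2) (by positivity : (0:ℝ) < 2 * μ * ρ)]
    have := mul_le_mul_of_nonneg_right (Real.sqrt_le_sqrt hgc) (by linarith : (0:ℝ) ≤ ρ - ρm)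
    linarith
end

section
/- The 2-shock curve u(ρ) = u₋ + sqrt( (1/(ρρ₋)) ( k1/(ρρ₋) + k2²(ρ+ρ₋)/(2μ) ) ) (ρ - ρ₋), for 0 < ρ < ρ₋, is strictly increasing in ρ, and u(ρ) → -∞ as ρ → 0⁺. -/
open Filter

/-- The 2-shock curve u(ρ) = u₋ + √((1/(ρρ₋))(k1/(ρρ₋) + k2²(ρ+ρ₋)/(2μ)))(ρ-ρ₋),
    0 < ρ < ρ₋, is strictly increasing, and u(ρ) → -∞ as ρ → 0⁺. -/
theorem two_shock_curve (k1 k2 μ ρm um : ℝ)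
    (hk1 : 0 < k1) (hk2 : 0 < k2) (hμ : 0 < μ) (hρm : 0 < ρm)
    (u : ℝ → ℝ)
    (hu : ∀ ρ, u ρ = um +
      Real.sqrt ((1 / (ρ * ρm)) * (k1 / (ρ * ρm) + k2 ^ 2 * (ρ + ρm) / (2 * μ)))
        * (ρ - ρm)) :
    StrictMonoOn u (Set.Ioo 0 ρm) ∧ Tendsto u (nhdsWithin 0 (Set.Ioi 0)) atBot := by
  set g : ℝ → ℝ := fun ρ => (1 / (ρ * ρm)) * (k1 / (ρ * ρm) + k2 ^ 2 * (ρ + ρm) / (2 * μ))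
    with hg
  have hgeq : ∀ ρ : ℝ, 0 < ρ →
      g ρ = k1 / (ρ ^ 2 * ρm ^ 2) + k2 ^ 2 / (2 * μ * ρm) + k2 ^ 2 / (2 * μ * ρ) := by
    intro ρ hρ
    have hρ' : ρ ≠ 0 := ne_of_gt hρ
    have hρm' : ρm ≠ 0 := ne_of_gt hρm
    have hμ' : μ ≠ 0 := ne_of_gt hμ
    simp only [hg]
    field_simp [hg]
    ring
  have hgpos : ∀ ρ : ℝ, 0 < ρ → 0 < g ρ := by
    intro ρ hρ
    rw [hgeq ρ hρ]
    positivity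
  have hgmono : ∀ ρ1 ρ2 : ℝ, 0 < ρ1 → ρ1 < ρ2 → g ρ2 ≤ g ρ1 := by
    intro ρ1 ρ2 h1 h12
    rw [hgeq ρ1 h1, hgeq ρ2 (h1.trans h12)]
    gcongr
  constructor
  · intro ρ1 h1 ρ2 h2 h12
    rw [hu ρ1, hu ρ2]
    have hs2 : Real.sqrt (g ρ2) ≤ Real.sqrt (g ρ1) :=
      Real.sqrt_le_sqrt (hgmono ρ1 ρ2 h1.1 h12)
    have hs1 : 0 < Real.sqrt (g ρ1) := Real.sqrt_pos.mpr (hgpos ρ1 h1.1)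
    have key : Real.sqrt (g ρ2) * (ρm - ρ2) < Real.sqrt (g ρ1) * (ρm - ρ1) :=
      mul_lt_mul' hs2 (by linarith [h2.2]) (by linarith [h2.2]) hs1
    nlinarith [key]
  · have hbound : ∀ᶠ ρ in nhdsWithin 0 (Set.Ioi 0), u ρ ≤ um - Real.sqrt k1 / (2 * ρ) := by
      have hmem : Set.Ioo (0:ℝ) (ρm / 2) ∈ nhdsWithin 0 (Set.Ioi 0) :=
        Ioo_mem_nhdsGT_of_mem (by constructor <;> [rfl; positivity])
      filter_upwards [hmem] with ρ hρ
      obtain ⟨hρ0, hρ2⟩ := hρ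
      have hρ' : ρ ≠ 0 := ne_of_gt hρ0
      have hρm' : ρm ≠ 0 := ne_of_gt hρm
      have h1 : (Real.sqrt k1 / (ρ * ρm)) ^ 2 ≤ g ρ := by
        rw [hgeq ρ hρ0, div_pow, Real.sq_sqrt hk1.le, mul_pow]
        have hA : 0 < k2 ^ 2 / (2 * μ * ρm) := by positivity
        have hB : 0 < k2 ^ 2 / (2 * μ * ρ) := by positivity
        linarith
      have hs : Real.sqrt k1 / (ρ * ρm) ≤ Real.sqrt (g ρ) := by
        have := Real.sqrt_le_sqrt h1
        rwa [Real.sqrt_sq (by positivity)] at this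
      have hneg : ρ - ρm ≤ 0 := by linarith
      have step1 : Real.sqrt (g ρ) * (ρ - ρm) ≤ Real.sqrt k1 / (ρ * ρm) * (ρ - ρm) :=
        mul_le_mul_of_nonpos_right hs hneg
      have step2 : Real.sqrt k1 / (ρ * ρm) * (ρ - ρm) ≤
          Real.sqrt k1 / (ρ * ρm) * (-(ρm / 2)) := by
        apply mul_le_mul_of_nonneg_left (by linarith) (by positivity)
      have step3 : Real.sqrt k1 / (ρ * ρm) * (-(ρm / 2)) = -(Real.sqrt k1 / (2 * ρ)) := by
        field_simp
      rw [hu ρ]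
      rw [step3] at step2
      linarith
    have hlim : Tendsto (fun ρ : ℝ => um - Real.sqrt k1 / (2 * ρ))
        (nhdsWithin 0 (Set.Ioi 0)) atBot := by
      have h1 : Tendsto (fun ρ : ℝ => Real.sqrt k1 / (2 * ρ))
          (nhdsWithin 0 (Set.Ioi 0)) atTop := by
        have hinv : Tendsto (fun ρ : ℝ => ρ⁻¹) (nhdsWithin 0 (Set.Ioi 0)) atTop :=
          tendsto_inv_nhdsGT_zero
        have hc : 0 < Real.sqrt k1 / 2 := by positivity
        have := hinv.const_mul_atTop hc
        refine this.congr fun ρ => ?_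
        field_simp
      have h2 : Tendsto (fun ρ : ℝ => -(Real.sqrt k1 / (2 * ρ)))
          (nhdsWithin 0 (Set.Ioi 0)) atBot := tendsto_neg_atTop_atBot.comp h1
      have := tendsto_atBot_add_const_left (nhdsWithin (0:ℝ) (Set.Ioi 0)) um h2
      simpa [sub_eq_add_neg] using this
    exact tendsto_atBot_mono' _ hbound hlim
end

section
/- If (ρ₋, u₋) and (ρ, u) with ρ > ρ₋ satisfy the Rankine–Hugoniot conditions -σ(ρ - ρ₋) + (ρu - ρ₋u₋) = 0 and -σ(ρu - ρ₋u₋) + (-k1/ρ + ρu² + k2²ρ²/(2μ)) - (-k1/ρ₋ + ρ₋u₋² + k2²ρ₋²/(2μ)) = 0, with u < u₋, then σ = u₋ - ρ sqrt( (1/(ρρ₋)) (k1/(ρρ₋) + k2²(ρ+ρ₋)/(2μ)) ) and u = u₋ - sqrt( (1/(ρρ₋)) (k1/(ρρ₋) + k2²(ρ+ρ₋)/(2μ)) )(ρ - ρ₋). -/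
set_option maxHeartbeats 1000000 in
/-- From the Rankine–Hugoniot conditions for the Chaplygin magnetogasdynamics system
    with ρ > ρ₋ and u < u₋, one recovers the 1-shock speed and curve formulas. -/
theorem one_shock_from_RH (k1 k2 μ : ℝ) (hk1 : 0 < k1) (hk2 : 0 < k2) (hμ : 0 < μ)
    (ρ ρm u um σ : ℝ) (hρm : 0 < ρm) (hρ : ρm < ρ) (hu : u < um)
    (hRH1 : -σ * (ρ - ρm) + (ρ * u - ρm * um) = 0)
    (hRH2 : -σ * (ρ * u - ρm * um) +
      ((-k1 / ρ + ρ * u ^ 2 + k2 ^ 2 * ρ ^ 2 / (2 * μ)) -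
        (-k1 / ρm + ρm * um ^ 2 + k2 ^ 2 * ρm ^ 2 / (2 * μ))) = 0) :
    σ = um - ρ * Real.sqrt ((1 / (ρ * ρm)) *
        (k1 / (ρ * ρm) + k2 ^ 2 * (ρ + ρm) / (2 * μ))) ∧
    u = um - Real.sqrt ((1 / (ρ * ρm)) *
        (k1 / (ρ * ρm) + k2 ^ 2 * (ρ + ρm) / (2 * μ))) * (ρ - ρm) := by
  have hρ0 : 0 < ρ := hρm.trans hρ
  have hdne : ρ - ρm ≠ 0 := sub_ne_zero.mpr (ne_of_gt hρ)
  have h1 : σ * (ρ - ρm) = ρ * u - ρm * um := by linarith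
  have hσ : σ = (ρ * u - ρm * um) / (ρ - ρm) := eq_div_of_mul_eq hdne h1
  rw [hσ] at hRH2
  set A := (1 / (ρ * ρm)) * (k1 / (ρ * ρm) + k2 ^ 2 * (ρ + ρm) / (2 * μ)) with hA
  have hA0 : 0 ≤ A := by positivity
  have hs2 : Real.sqrt A ^ 2 = A := Real.sq_sqrt hA0
  have key : (um - u) ^ 2 = A * (ρ - ρm) ^ 2 := by
    rw [hA]
    field_simp at hRH2 ⊢
    nlinarith [hRH2, sq_nonneg (ρ - ρm), sq_nonneg (u - um)]
  have hsqA : 0 ≤ Real.sqrt A := Real.sqrt_nonneg A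
  have hq : (um - u) ^ 2 = (Real.sqrt A * (ρ - ρm)) ^ 2 := by
    rw [mul_pow, hs2, key]
  have heq : um - u = Real.sqrt A * (ρ - ρm) := by
    have h0 : 0 ≤ um - u := by linarith
    have h0' : 0 ≤ Real.sqrt A * (ρ - ρm) := by
      apply mul_nonneg hsqA; linarith
    rw [← Real.sqrt_sq h0, hq, Real.sqrt_sq h0']
  constructor
  · have : σ * (ρ - ρm) = (um - ρ * Real.sqrt A) * (ρ - ρm) := by
      rw [h1]; linear_combination (-ρ) * heq
    exact mul_right_cancel₀ hdne this
  · linarith [heq]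
end

section
/- Let ρ₋, ρ₊ > 0 with ρ₋ ≠ ρ₊ and u₋ > u₊. Then x(t) = σt, w(t) = sqrt(ρ₋ρ₊)(u₋ - u₊) t with σ = (sqrt(ρ₋)u₋ + sqrt(ρ₊)u₊)/(sqrt(ρ₋) + sqrt(ρ₊)) is the unique solution of the generalized Rankine–Hugoniot ODE system dx/dt = σ, dw/dt = σ(ρ₊-ρ₋) - (ρ₊u₊ - ρ₋u₋), d(wσ)/dt = σ(ρ₊u₊ - ρ₋u₋) - (ρ₊u₊² - ρ₋u₋²) with constant σ and initial data x(0) = 0, w(0) = 0, and this σ satisfies the entropy condition u₊ < σ < u₋. -/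
/-- For ρ₋ ≠ ρ₊ and u₋ > u₊, x(t) = σt, w(t) = √(ρ₋ρ₊)(u₋-u₊)t with
    σ = (√ρ₋ u₋ + √ρ₊ u₊)/(√ρ₋ + √ρ₊) is the unique solution (with constant speed,
    satisfying the entropy condition) of the generalized Rankine–Hugoniot system,
    and u₊ < σ < u₋. -/
theorem delta_shock_GRH_unique (ρm ρp um up : ℝ)
    (hρm : 0 < ρm) (hρp : 0 < ρp) (hne : ρm ≠ ρp) (hu : up < um) :
    let σ := (Real.sqrt ρm * um + Real.sqrt ρp * up) / (Real.sqrt ρm + Real.sqrt ρp)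
    let x : ℝ → ℝ := fun t => σ * t
    let w : ℝ → ℝ := fun t => Real.sqrt (ρm * ρp) * (um - up) * t
    ((∀ t, HasDerivAt x σ t) ∧
     (∀ t, HasDerivAt w (σ * (ρp - ρm) - (ρp * up - ρm * um)) t) ∧
     (∀ t, HasDerivAt (fun t => w t * σ)
        (σ * (ρp * up - ρm * um) - (ρp * up ^ 2 - ρm * um ^ 2)) t) ∧
     x 0 = 0 ∧ w 0 = 0) ∧
    (up < σ ∧ σ < um) ∧
    (∀ (σ' : ℝ) (x' w' : ℝ → ℝ),
      (∀ t, HasDerivAt x' σ' t) →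
      (∀ t, HasDerivAt w' (σ' * (ρp - ρm) - (ρp * up - ρm * um)) t) →
      (∀ t, HasDerivAt (fun t => w' t * σ')
        (σ' * (ρp * up - ρm * um) - (ρp * up ^ 2 - ρm * um ^ 2)) t) →
      x' 0 = 0 → w' 0 = 0 → up < σ' → σ' < um →
      σ' = σ ∧ x' = x ∧ w' = w) := by
  intro σ x w
  set a := Real.sqrt ρm with hadef
  set b := Real.sqrt ρp with hbdef
  have ha0 : 0 < a := Real.sqrt_pos.mpr hρm
  have hb0 : 0 < b := Real.sqrt_pos.mpr hρp
  have ha2 : a ^ 2 = ρm := Real.sq_sqrt hρm.le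
  have hb2 : b ^ 2 = ρp := Real.sq_sqrt hρp.le
  have hab : Real.sqrt (ρm * ρp) = a * b := Real.sqrt_mul hρm.le ρp
  have hab0 : a + b ≠ 0 := by positivity
  have hσv : σ = (a * um + b * up) / (a + b) := rfl
  -- key algebraic identities
  have E1 : a * b * (um - up) = σ * (ρp - ρm) - (ρp * up - ρm * um) := by
    rw [hσv, ← ha2, ← hb2]
    field_simp
    ring
  have E2 : σ * (a * b * (um - up)) =
      σ * (ρp * up - ρm * um) - (ρp * up ^ 2 - ρm * um ^ 2) := by
    rw [hσv, ← ha2, ← hb2]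
    field_simp
    ring
  have hC : Real.sqrt (ρm * ρp) * (um - up) = σ * (ρp - ρm) - (ρp * up - ρm * um) := by
    rw [hab]; exact E1
  have hwderiv : ∀ t, HasDerivAt w (σ * (ρp - ρm) - (ρp * up - ρm * um)) t := by
    intro t
    have h : HasDerivAt (fun s : ℝ => Real.sqrt (ρm * ρp) * (um - up) * s)
        (σ * (ρp - ρm) - (ρp * up - ρm * um)) t := by
      rw [← hC]
      simpa using (hasDerivAt_id t).const_mul (Real.sqrt (ρm * ρp) * (um - up))
    exact h
  refine ⟨⟨?_, hwderiv, ?_, ?_, ?_⟩, ⟨?_, ?_⟩, ?_⟩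
  · intro t
    simpa using (hasDerivAt_id t).const_mul σ
  · intro t
    have h := (hwderiv t).mul_const σ
    have h3 : (σ * (ρp - ρm) - (ρp * up - ρm * um)) * σ =
        σ * (ρp * up - ρm * um) - (ρp * up ^ 2 - ρm * um ^ 2) := by
      linear_combination E2 - σ * E1
    rwa [h3] at h
  · show σ * 0 = 0; ring
  · show Real.sqrt (ρm * ρp) * (um - up) * 0 = 0; ring
  · rw [hσv, lt_div_iff₀ (by positivity)]
    nlinarith
  · rw [hσv, div_lt_iff₀ (by positivity)]
    nlinarith
  · intro σ' x' w' hx' hw' hww' hx0 hw0 h1 h2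
    have hD : (σ' * (ρp - ρm) - (ρp * up - ρm * um)) * σ' =
        σ' * (ρp * up - ρm * um) - (ρp * up ^ 2 - ρm * um ^ 2) :=
      ((hw' 0).mul_const σ').unique (hww' 0)
    have hquad : ρp * (σ' - up) ^ 2 = ρm * (um - σ') ^ 2 := by linear_combination hD
    have hsq : b * (σ' - up) = a * (um - σ') := by
      have h := congrArg Real.sqrt hquad
      rwa [Real.sqrt_mul hρp.le, Real.sqrt_mul hρm.le,
        Real.sqrt_sq (by linarith), Real.sqrt_sq (by linarith), ← hadef, ← hbdef] at h
    have hσ'σ : σ' = σ := by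
      rw [hσv, eq_div_iff hab0]
      linear_combination hsq
    rw [hσ'σ] at hx' hw'
    refine ⟨hσ'σ, ?_, ?_⟩
    · funext t
      have key : ∀ s, HasDerivAt (fun s => x' s - σ * s) 0 s := by
        intro s
        have h := (hx' s).sub ((hasDerivAt_id s).const_mul σ)
        rw [mul_one, sub_self] at h
        exact h
      have hc := is_const_of_deriv_eq_zero (fun s => (key s).differentiableAt)
        (fun s => (key s).deriv) t 0
      have : x' t - σ * t = x' 0 - σ * 0 := hc
      show x' t = σ * t
      rw [hx0] at this
      linarith
    · funext t
      set k := σ * (ρp - ρm) - (ρp * up - ρm * um) with hk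
      have key : ∀ s, HasDerivAt (fun s => w' s - k * s) 0 s := by
        intro s
        have h := (hw' s).sub ((hasDerivAt_id s).const_mul k)
        rw [mul_one, sub_self] at h
        exact h
      have hc := is_const_of_deriv_eq_zero (fun s => (key s).differentiableAt)
        (fun s => (key s).deriv) t 0
      have hct : w' t - k * t = w' 0 - k * 0 := hc
      rw [hw0] at hct
      show w' t = Real.sqrt (ρm * ρp) * (um - up) * t
      rw [hC]
      linarith
end

section
/- Fix ρ₋, ρ₊ > 0 and u₋ > u₊. Suppose for each pair (k1, k2) with k1, k2 > 0 there exists ρ* = ρ*(k1,k2) > max(ρ₋, ρ₊) satisfying u₋ - u₊ = sqrt(1/ρ₋ - 1/ρ*) · sqrt( k1(1/ρ₋ - 1/ρ*) + k2²(ρ*² - ρ₋²)/(2μ) ) + sqrt(1/ρ₊ - 1/ρ*) · sqrt( k1(1/ρ₊ - 1/ρ*) + k2²(ρ*² - ρ₊²)/(2μ) ). Then ρ*(k1,k2) → +∞ as (k1,k2) → (0,0). -/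
open Filter

/-- As the pressure and magnetic field vanish, the intermediate density of the
    two-shock Riemann solution blows up: ρ*(k1,k2) → +∞ as (k1,k2) → (0⁺,0⁺). -/
theorem intermediate_density_blowup (μ ρm ρp um up : ℝ)
    (hμ : 0 < μ) (hρm : 0 < ρm) (hρp : 0 < ρp) (hu : up < um)
    (ρstar : ℝ → ℝ → ℝ)
    (hρstar : ∀ k1 k2 : ℝ, 0 < k1 → 0 < k2 →
      max ρm ρp < ρstar k1 k2 ∧
      um - up =
        Real.sqrt (1 / ρm - 1 / ρstar k1 k2) *
          Real.sqrt (k1 * (1 / ρm - 1 / ρstar k1 k2) +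
            k2 ^ 2 * ((ρstar k1 k2) ^ 2 - ρm ^ 2) / (2 * μ)) +
        Real.sqrt (1 / ρp - 1 / ρstar k1 k2) *
          Real.sqrt (k1 * (1 / ρp - 1 / ρstar k1 k2) +
            k2 ^ 2 * ((ρstar k1 k2) ^ 2 - ρp ^ 2) / (2 * μ))) :
    Tendsto (fun p : ℝ × ℝ => ρstar p.1 p.2)
      ((nhdsWithin 0 (Set.Ioi 0)) ×ˢ (nhdsWithin 0 (Set.Ioi 0))) atTop := by
  rw [tendsto_atTop]
  intro b
  set M : ℝ := max b 0 with hMdef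
  set g : ℝ × ℝ → ℝ := fun p =>
    Real.sqrt (1 / ρm) * Real.sqrt (p.1 * (1 / ρm) + p.2 ^ 2 * M ^ 2 / (2 * μ)) +
    Real.sqrt (1 / ρp) * Real.sqrt (p.1 * (1 / ρp) + p.2 ^ 2 * M ^ 2 / (2 * μ)) with hgdef
  have hgc : Continuous g := by
    apply Continuous.add <;> apply Continuous.mul <;> fun_prop
  have hg0 : g (0, 0) = 0 := by simp [hgdef]
  have hle : (nhdsWithin (0:ℝ) (Set.Ioi 0)) ×ˢ (nhdsWithin (0:ℝ) (Set.Ioi 0)) ≤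
      nhds ((0:ℝ), (0:ℝ)) := by
    rw [nhds_prod_eq]
    exact Filter.prod_mono nhdsWithin_le_nhds nhdsWithin_le_nhds
  have hg : Tendsto g ((nhdsWithin (0:ℝ) (Set.Ioi 0)) ×ˢ (nhdsWithin (0:ℝ) (Set.Ioi 0)))
      (nhds 0) := by
    have := (hgc.tendsto (0, 0)).mono_left hle
    rwa [hg0] at this
  have hev : ∀ᶠ p in (nhdsWithin (0:ℝ) (Set.Ioi 0)) ×ˢ (nhdsWithin (0:ℝ) (Set.Ioi 0)),
      g p < um - up := hg (Iio_mem_nhds (sub_pos.2 hu))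
  have hmem : (Set.Ioi (0:ℝ)) ×ˢ (Set.Ioi (0:ℝ)) ∈
      (nhdsWithin (0:ℝ) (Set.Ioi 0)) ×ˢ (nhdsWithin (0:ℝ) (Set.Ioi 0)) :=
    Filter.prod_mem_prod self_mem_nhdsWithin self_mem_nhdsWithin
  filter_upwards [hev, hmem] with p hgp hp
  by_contra hb
  push_neg at hb
  obtain ⟨hρgt, heq⟩ := hρstar p.1 p.2 hp.1 hp.2
  set ρ := ρstar p.1 p.2 with hρdef
  have hρpos : 0 < ρ := lt_of_le_of_lt (le_trans hρm.le (le_max_left ρm ρp)) hρgt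
  have hρM : ρ ≤ M := le_trans hb.le (le_max_left b 0)
  have hρ2 : ρ ^ 2 ≤ M ^ 2 := by nlinarith
  have hinv : 0 ≤ 1 / ρ := by positivity
  have hk1 : (0:ℝ) < p.1 := hp.1
  have hk2 : (0:ℝ) < p.2 := hp.2
  have hbm : um - up ≤ g p := by
    rw [heq, hgdef]
    have t1 : Real.sqrt (1 / ρm - 1 / ρ) *
        Real.sqrt (p.1 * (1 / ρm - 1 / ρ) + p.2 ^ 2 * (ρ ^ 2 - ρm ^ 2) / (2 * μ)) ≤
        Real.sqrt (1 / ρm) * Real.sqrt (p.1 * (1 / ρm) + p.2 ^ 2 * M ^ 2 / (2 * μ)) := by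
      apply mul_le_mul
      · apply Real.sqrt_le_sqrt; linarith
      · apply Real.sqrt_le_sqrt
        have h1 : p.1 * (1 / ρm - 1 / ρ) ≤ p.1 * (1 / ρm) := by
          apply mul_le_mul_of_nonneg_left _ hk1.le; linarith
        have h2 : p.2 ^ 2 * (ρ ^ 2 - ρm ^ 2) / (2 * μ) ≤ p.2 ^ 2 * M ^ 2 / (2 * μ) := by
          apply div_le_div_of_nonneg_right _ (by linarith)
          · apply mul_le_mul_of_nonneg_left _ (sq_nonneg p.2); nlinarith [sq_nonneg ρm]
        linarith
      · exact Real.sqrt_nonneg _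
      · exact Real.sqrt_nonneg _
    have t2 : Real.sqrt (1 / ρp - 1 / ρ) *
        Real.sqrt (p.1 * (1 / ρp - 1 / ρ) + p.2 ^ 2 * (ρ ^ 2 - ρp ^ 2) / (2 * μ)) ≤
        Real.sqrt (1 / ρp) * Real.sqrt (p.1 * (1 / ρp) + p.2 ^ 2 * M ^ 2 / (2 * μ)) := by
      apply mul_le_mul
      · apply Real.sqrt_le_sqrt; linarith
      · apply Real.sqrt_le_sqrt
        have h1 : p.1 * (1 / ρp - 1 / ρ) ≤ p.1 * (1 / ρp) := by
          apply mul_le_mul_of_nonneg_left _ hk1.le; linarith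
        have h2 : p.2 ^ 2 * (ρ ^ 2 - ρp ^ 2) / (2 * μ) ≤ p.2 ^ 2 * M ^ 2 / (2 * μ) := by
          apply div_le_div_of_nonneg_right _ (by linarith)
          · apply mul_le_mul_of_nonneg_left _ (sq_nonneg p.2); nlinarith [sq_nonneg ρp]
        linarith
      · exact Real.sqrt_nonneg _
      · exact Real.sqrt_nonneg _
    exact add_le_add t1 t2
  linarith
end

section
/- Under the assumptions of the previous statement (two-shock intermediate state ρ* satisfying the matching equation, u₋ > u₊), one has lim_{k1,k2→0} k2² ρ*² = 2μ ρ₋ρ₊ (u₋ - u₊)² / (sqrt(ρ₋) + sqrt(ρ₊))². -/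
open Filter

lemma sqrt_add_le' (x y : ℝ) (hx : 0 ≤ x) (hy : 0 ≤ y) :
    Real.sqrt (x + y) ≤ Real.sqrt x + Real.sqrt y := by
  have h : x + y ≤ (Real.sqrt x + Real.sqrt y) ^ 2 := by
    nlinarith [Real.sq_sqrt hx, Real.sq_sqrt hy,
      mul_nonneg (Real.sqrt_nonneg x) (Real.sqrt_nonneg y)]
  calc Real.sqrt (x + y) ≤ Real.sqrt ((Real.sqrt x + Real.sqrt y) ^ 2) :=
        Real.sqrt_le_sqrt h
    _ = Real.sqrt x + Real.sqrt y := Real.sqrt_sq (by positivity)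

lemma sqrt_sub_ge' (x y : ℝ) (hy : 0 ≤ y) :
    Real.sqrt x - Real.sqrt y ≤ Real.sqrt (x - y) := by
  rcases le_or_gt x y with h | h
  · have h2 : Real.sqrt x ≤ Real.sqrt y := Real.sqrt_le_sqrt h
    have := Real.sqrt_nonneg (x - y); linarith
  · have hxy : 0 ≤ x - y := by linarith
    have h2 := sqrt_add_le' (x - y) y hxy hy
    rw [sub_add_cancel] at h2
    linarith

lemma term_upper (μ ρ k1 k2 s : ℝ) (hμ : 0 < μ) (hρ : 0 < ρ) (hk1 : 0 < k1)
    (hk2 : 0 < k2) (hs : ρ < s) :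
    Real.sqrt (1 / ρ - 1 / s) *
      Real.sqrt (k1 * (1 / ρ - 1 / s) + k2 ^ 2 * (s ^ 2 - ρ ^ 2) / (2 * μ)) ≤
    Real.sqrt k1 * (1 / ρ) + Real.sqrt (1 / ρ) * (k2 * s / Real.sqrt (2 * μ)) := by
  have hs0 : 0 < s := hρ.trans hs
  have hsi : 0 < 1 / s := by positivity
  have h1 : Real.sqrt (1 / ρ - 1 / s) ≤ Real.sqrt (1 / ρ) :=
    Real.sqrt_le_sqrt (by linarith)
  have h2 : k1 * (1 / ρ - 1 / s) + k2 ^ 2 * (s ^ 2 - ρ ^ 2) / (2 * μ) ≤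
      k1 * (1 / ρ) + k2 ^ 2 * s ^ 2 / (2 * μ) := by
    gcongr
    · linarith
    · nlinarith
  have h3 : Real.sqrt (k1 * (1 / ρ) + k2 ^ 2 * s ^ 2 / (2 * μ)) ≤
      Real.sqrt (k1 * (1 / ρ)) + Real.sqrt (k2 ^ 2 * s ^ 2 / (2 * μ)) :=
    sqrt_add_le' _ _ (by positivity) (by positivity)
  have e1 : Real.sqrt (k2 ^ 2 * s ^ 2 / (2 * μ)) = k2 * s / Real.sqrt (2 * μ) := by
    rw [Real.sqrt_div (by positivity), ← mul_pow, Real.sqrt_sq (by positivity)]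
  have e2 : Real.sqrt (k1 * (1 / ρ)) = Real.sqrt k1 * Real.sqrt (1 / ρ) :=
    Real.sqrt_mul hk1.le _
  have e3 : Real.sqrt (1 / ρ) * Real.sqrt (1 / ρ) = 1 / ρ :=
    Real.mul_self_sqrt (by positivity)
  calc Real.sqrt (1 / ρ - 1 / s) *
        Real.sqrt (k1 * (1 / ρ - 1 / s) + k2 ^ 2 * (s ^ 2 - ρ ^ 2) / (2 * μ))
      ≤ Real.sqrt (1 / ρ) * Real.sqrt (k1 * (1 / ρ) + k2 ^ 2 * s ^ 2 / (2 * μ)) := by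
        apply mul_le_mul h1 (Real.sqrt_le_sqrt h2) (Real.sqrt_nonneg _) (Real.sqrt_nonneg _)
    _ ≤ Real.sqrt (1 / ρ) *
        (Real.sqrt (k1 * (1 / ρ)) + Real.sqrt (k2 ^ 2 * s ^ 2 / (2 * μ))) := by
        apply mul_le_mul_of_nonneg_left h3 (Real.sqrt_nonneg _)
    _ = Real.sqrt k1 * (1 / ρ) + Real.sqrt (1 / ρ) * (k2 * s / Real.sqrt (2 * μ)) := by
        rw [e1, e2, mul_add]; linear_combination Real.sqrt k1 * e3

lemma term_lower (μ ρ M k1 k2 s : ℝ) (hμ : 0 < μ) (hρ : 0 < ρ) (hk1 : 0 < k1)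
    (hk2 : 0 < k2) (hs : ρ < s) (hM : ρ ≤ M) :
    Real.sqrt (1 / ρ - 1 / s) * ((k2 * s - k2 * M) / Real.sqrt (2 * μ)) ≤
    Real.sqrt (1 / ρ - 1 / s) *
      Real.sqrt (k1 * (1 / ρ - 1 / s) + k2 ^ 2 * (s ^ 2 - ρ ^ 2) / (2 * μ)) := by
  have hs0 : 0 < s := hρ.trans hs
  have hM0 : 0 ≤ M := hρ.le.trans hM
  have key : (k2 * s - k2 * M) / Real.sqrt (2 * μ) ≤
      Real.sqrt (k1 * (1 / ρ - 1 / s) + k2 ^ 2 * (s ^ 2 - ρ ^ 2) / (2 * μ)) := by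
    have e1 : Real.sqrt (k2 ^ 2 * s ^ 2 / (2 * μ)) = k2 * s / Real.sqrt (2 * μ) := by
      rw [Real.sqrt_div (by positivity), ← mul_pow, Real.sqrt_sq (by positivity)]
    have e2 : Real.sqrt (k2 ^ 2 * M ^ 2 / (2 * μ)) = k2 * M / Real.sqrt (2 * μ) := by
      rw [Real.sqrt_div (by positivity), ← mul_pow, Real.sqrt_sq (by positivity)]
    have h1 := sqrt_sub_ge' (k2 ^ 2 * s ^ 2 / (2 * μ)) (k2 ^ 2 * M ^ 2 / (2 * μ))
      (by positivity)
    rw [e1, e2] at h1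
    have h2 : Real.sqrt (k2 ^ 2 * s ^ 2 / (2 * μ) - k2 ^ 2 * M ^ 2 / (2 * μ)) ≤
        Real.sqrt (k1 * (1 / ρ - 1 / s) + k2 ^ 2 * (s ^ 2 - ρ ^ 2) / (2 * μ)) := by
      apply Real.sqrt_le_sqrt
      have hinner : 0 ≤ k1 * (1 / ρ - 1 / s) := by
        have : 1 / s < 1 / ρ := one_div_lt_one_div_of_lt hρ hs
        nlinarith
      have hsq : ρ ^ 2 ≤ M ^ 2 := by nlinarith
      have hnum : k2 ^ 2 * s ^ 2 - k2 ^ 2 * M ^ 2 ≤ k2 ^ 2 * (s ^ 2 - ρ ^ 2) := by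
        nlinarith
      have hdiv : (k2 ^ 2 * s ^ 2 - k2 ^ 2 * M ^ 2) / (2 * μ) ≤
          k2 ^ 2 * (s ^ 2 - ρ ^ 2) / (2 * μ) :=
        (div_le_div_iff_of_pos_right (by positivity)).mpr hnum
      rw [div_sub_div_same]
      linarith
    calc (k2 * s - k2 * M) / Real.sqrt (2 * μ)
        = k2 * s / Real.sqrt (2 * μ) - k2 * M / Real.sqrt (2 * μ) := by ring
      _ ≤ Real.sqrt (k2 ^ 2 * s ^ 2 / (2 * μ) - k2 ^ 2 * M ^ 2 / (2 * μ)) := h1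
      _ ≤ _ := h2
  exact mul_le_mul_of_nonneg_left key (Real.sqrt_nonneg _)

/-- Lemma 1: under the two-shock matching equation with u₋ > u₊,
    k2² ρ*² → 2μ ρ₋ρ₊ (u₋-u₊)² / (√ρ₋ + √ρ₊)² as (k1,k2) → (0⁺,0⁺). -/
theorem limit_k2sq_rhostar_sq (μ ρm ρp um up : ℝ)
    (hμ : 0 < μ) (hρm : 0 < ρm) (hρp : 0 < ρp) (hu : up < um)
    (ρstar : ℝ → ℝ → ℝ)
    (hρstar : ∀ k1 k2 : ℝ, 0 < k1 → 0 < k2 →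
      max ρm ρp < ρstar k1 k2 ∧
      um - up =
        Real.sqrt (1 / ρm - 1 / ρstar k1 k2) *
          Real.sqrt (k1 * (1 / ρm - 1 / ρstar k1 k2) +
            k2 ^ 2 * ((ρstar k1 k2) ^ 2 - ρm ^ 2) / (2 * μ)) +
        Real.sqrt (1 / ρp - 1 / ρstar k1 k2) *
          Real.sqrt (k1 * (1 / ρp - 1 / ρstar k1 k2) +
            k2 ^ 2 * ((ρstar k1 k2) ^ 2 - ρp ^ 2) / (2 * μ)))
    (hblow : Tendsto (fun p : ℝ × ℝ => ρstar p.1 p.2)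
      ((nhdsWithin 0 (Set.Ioi 0)) ×ˢ (nhdsWithin 0 (Set.Ioi 0))) atTop) :
    Tendsto (fun p : ℝ × ℝ => p.2 ^ 2 * (ρstar p.1 p.2) ^ 2)
      ((nhdsWithin 0 (Set.Ioi 0)) ×ˢ (nhdsWithin 0 (Set.Ioi 0)))
      (nhds (2 * μ * ρm * ρp * (um - up) ^ 2 /
        (Real.sqrt ρm + Real.sqrt ρp) ^ 2)) := by
  set F := (nhdsWithin (0:ℝ) (Set.Ioi 0)) ×ˢ (nhdsWithin (0:ℝ) (Set.Ioi 0)) with hF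
  have hc : 0 < um - up := sub_pos.mpr hu
  set c := um - up with hcdef
  set S : ℝ := Real.sqrt (1 / ρm) + Real.sqrt (1 / ρp) with hSdef
  have hS : 0 < S := by positivity
  set M : ℝ := max ρm ρp with hMdef
  set L' : ℝ := Real.sqrt (2 * μ) * c / S with hL'def
  have hμ2 : (0:ℝ) < Real.sqrt (2 * μ) := Real.sqrt_pos.mpr (by linarith)
  -- eventual bounds
  have hev : ∀ᶠ p : ℝ × ℝ in F,
      Real.sqrt (2 * μ) * (c - Real.sqrt p.1 * (1 / ρm + 1 / ρp)) / S ≤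
        p.2 * ρstar p.1 p.2 ∧
      p.2 * ρstar p.1 p.2 ≤ Real.sqrt (2 * μ) * c /
        (Real.sqrt (1 / ρm - 1 / ρstar p.1 p.2) +
          Real.sqrt (1 / ρp - 1 / ρstar p.1 p.2)) + p.2 * M := by
    have hmem : ∀ᶠ p : ℝ × ℝ in F, p ∈ (Set.Ioi (0:ℝ)) ×ˢ (Set.Ioi (0:ℝ)) :=
      Filter.eventually_of_mem (prod_mem_prod self_mem_nhdsWithin self_mem_nhdsWithin)
        fun _ h => h
    filter_upwards [hmem] with p hp
    have hk1 : 0 < p.1 := hp.1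
    have hk2 : 0 < p.2 := hp.2
    obtain ⟨hsM, heq⟩ := hρstar p.1 p.2 hk1 hk2
    set s := ρstar p.1 p.2 with hsdef
    have hsm : ρm < s := (le_max_left ρm ρp).trans_lt hsM
    have hsp : ρp < s := (le_max_right ρm ρp).trans_lt hsM
    have hs0 : 0 < s := hρm.trans hsm
    constructor
    · -- lower bound
      have t1 := term_upper μ ρm p.1 p.2 s hμ hρm hk1 hk2 hsm
      have t2 := term_upper μ ρp p.1 p.2 s hμ hρp hk1 hk2 hsp
      have hexp : S * (p.2 * s / Real.sqrt (2 * μ)) =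
          Real.sqrt (1 / ρm) * (p.2 * s / Real.sqrt (2 * μ)) +
          Real.sqrt (1 / ρp) * (p.2 * s / Real.sqrt (2 * μ)) := by
        rw [hSdef]; ring
      have hsum : c - Real.sqrt p.1 * (1 / ρm + 1 / ρp) ≤
          S * (p.2 * s / Real.sqrt (2 * μ)) := by
        rw [heq, hexp, mul_add]; linarith [t1, t2]
      rw [div_le_iff₀ hS]
      calc Real.sqrt (2 * μ) * (c - Real.sqrt p.1 * (1 / ρm + 1 / ρp))
          ≤ Real.sqrt (2 * μ) * (S * (p.2 * s / Real.sqrt (2 * μ))) :=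
            mul_le_mul_of_nonneg_left hsum hμ2.le
        _ = p.2 * s * S := by field_simp
    · -- upper bound
      have t1 := term_lower μ ρm M p.1 p.2 s hμ hρm hk1 hk2 hsm (le_max_left ρm ρp)
      have t2 := term_lower μ ρp M p.1 p.2 s hμ hρp hk1 hk2 hsp (le_max_right ρm ρp)
      set P := Real.sqrt (1 / ρm - 1 / s) + Real.sqrt (1 / ρp - 1 / s) with hPdef
      have ham : 0 < 1 / ρm - 1 / s := by
        rw [sub_pos]; exact one_div_lt_one_div_of_lt hρm hsm
      have hP : 0 < P := by
        have : 0 < Real.sqrt (1 / ρm - 1 / s) := Real.sqrt_pos.mpr ham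
        have := Real.sqrt_nonneg (1 / ρp - 1 / s)
        rw [hPdef]; linarith
      have hexp : P * ((p.2 * s - p.2 * M) / Real.sqrt (2 * μ)) =
          Real.sqrt (1 / ρm - 1 / s) * ((p.2 * s - p.2 * M) / Real.sqrt (2 * μ)) +
          Real.sqrt (1 / ρp - 1 / s) * ((p.2 * s - p.2 * M) / Real.sqrt (2 * μ)) := by
        rw [hPdef]; ring
      have hsum : P * ((p.2 * s - p.2 * M) / Real.sqrt (2 * μ)) ≤ c := by
        rw [hexp, heq]; exact add_le_add t1 t2
      have h2 : (p.2 * s - p.2 * M) * P ≤ Real.sqrt (2 * μ) * c := by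
        have h3 := mul_le_mul_of_nonneg_left hsum hμ2.le
        have h4 : Real.sqrt (2 * μ) * (P * ((p.2 * s - p.2 * M) / Real.sqrt (2 * μ))) =
            (p.2 * s - p.2 * M) * P := by field_simp
        rw [← h4]; exact h3
      have h5 : p.2 * s - p.2 * M ≤ Real.sqrt (2 * μ) * c / P := (le_div_iff₀ hP).mpr h2
      linarith
  -- limits of the bounding functions
  have hfst : Tendsto (fun p : ℝ × ℝ => p.1) F (nhds 0) :=
    tendsto_fst.mono_right nhdsWithin_le_nhds
  have hsnd : Tendsto (fun p : ℝ × ℝ => p.2) F (nhds 0) :=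
    tendsto_snd.mono_right nhdsWithin_le_nhds
  have hA : Tendsto (fun p : ℝ × ℝ =>
      Real.sqrt (2 * μ) * (c - Real.sqrt p.1 * (1 / ρm + 1 / ρp)) / S) F (nhds L') := by
    have h1 : Tendsto (fun p : ℝ × ℝ => Real.sqrt p.1) F (nhds 0) := by
      have := (Real.continuous_sqrt.tendsto 0).comp hfst
      simpa only [Function.comp_def, Real.sqrt_zero] using this
    have h2 := (((h1.mul_const (1 / ρm + 1 / ρp)).const_sub c).const_mul
      (Real.sqrt (2 * μ))).div_const S
    simpa only [zero_mul, sub_zero] using h2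
  have hB : Tendsto (fun p : ℝ × ℝ => Real.sqrt (2 * μ) * c /
      (Real.sqrt (1 / ρm - 1 / ρstar p.1 p.2) +
        Real.sqrt (1 / ρp - 1 / ρstar p.1 p.2)) + p.2 * M) F (nhds L') := by
    have hinv : Tendsto (fun p : ℝ × ℝ => 1 / ρstar p.1 p.2) F (nhds 0) := by
      simpa [one_div, Pi.inv_def] using hblow.inv_tendsto_atTop
    have hm : Tendsto (fun p : ℝ × ℝ => Real.sqrt (1 / ρm - 1 / ρstar p.1 p.2)) F
        (nhds (Real.sqrt (1 / ρm))) := by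
      have h0 : Tendsto (fun p : ℝ × ℝ => 1 / ρm - 1 / ρstar p.1 p.2) F
          (nhds (1 / ρm - 0)) := tendsto_const_nhds.sub hinv
      have := (Real.continuous_sqrt.tendsto _).comp h0
      simpa only [Function.comp_def, sub_zero] using this
    have hp' : Tendsto (fun p : ℝ × ℝ => Real.sqrt (1 / ρp - 1 / ρstar p.1 p.2)) F
        (nhds (Real.sqrt (1 / ρp))) := by
      have h0 : Tendsto (fun p : ℝ × ℝ => 1 / ρp - 1 / ρstar p.1 p.2) F
          (nhds (1 / ρp - 0)) := tendsto_const_nhds.sub hinv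
      have := (Real.continuous_sqrt.tendsto _).comp h0
      simpa only [Function.comp_def, sub_zero] using this
    have hPend := hm.add hp'
    have hdiv : Tendsto (fun p : ℝ × ℝ => Real.sqrt (2 * μ) * c /
        (Real.sqrt (1 / ρm - 1 / ρstar p.1 p.2) +
          Real.sqrt (1 / ρp - 1 / ρstar p.1 p.2))) F (nhds (Real.sqrt (2 * μ) * c / S)) :=
      tendsto_const_nhds.div hPend hS.ne'
    have hM0 : Tendsto (fun p : ℝ × ℝ => p.2 * M) F (nhds 0) := by
      simpa only [zero_mul] using hsnd.mul_const M
    have := hdiv.add hM0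
    simpa only [add_zero] using this
  have hr : Tendsto (fun p : ℝ × ℝ => p.2 * ρstar p.1 p.2) F (nhds L') :=
    tendsto_of_tendsto_of_tendsto_of_le_of_le' hA hB
      (hev.mono fun p h => h.1) (hev.mono fun p h => h.2)
  have hfinal := hr.pow 2
  have hfun : (fun p : ℝ × ℝ => p.2 ^ 2 * (ρstar p.1 p.2) ^ 2) =
      fun p : ℝ × ℝ => (p.2 * ρstar p.1 p.2) ^ 2 := by
    funext p; ring
  have hval : L' ^ 2 = 2 * μ * ρm * ρp * c ^ 2 / (Real.sqrt ρm + Real.sqrt ρp) ^ 2 := by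
    have hsm0 : 0 < Real.sqrt ρm := Real.sqrt_pos.mpr hρm
    have hsp0 : 0 < Real.sqrt ρp := Real.sqrt_pos.mpr hρp
    have hsm2 : Real.sqrt ρm ^ 2 = ρm := Real.sq_sqrt hρm.le
    have hsp2 : Real.sqrt ρp ^ 2 = ρp := Real.sq_sqrt hρp.le
    have e1 : Real.sqrt (1 / ρm) = 1 / Real.sqrt ρm := by
      rw [one_div, Real.sqrt_inv, one_div]
    have e2 : Real.sqrt (1 / ρp) = 1 / Real.sqrt ρp := by
      rw [one_div, Real.sqrt_inv, one_div]
    have h2μ : Real.sqrt (2 * μ) ^ 2 = 2 * μ := Real.sq_sqrt (by positivity)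
    rw [hL'def, hSdef, e1, e2, div_pow, mul_pow, h2μ]
    rw [div_eq_div_iff (by positivity) (by positivity)]
    field_simp
    linear_combination ((Real.sqrt ρm + Real.sqrt ρp) ^ 2) *
      (Real.sqrt ρp ^ 2 * hsm2 + ρm * hsp2)
  rw [hfun, show 2 * μ * ρm * ρp * c ^ 2 / (Real.sqrt ρm + Real.sqrt ρp) ^ 2
    = L' ^ 2 from hval.symm]
  exact hfinal
end

section
/- Under the same assumptions, the intermediate velocity u* = u₋ - sqrt( (1/(ρ*ρ₋)) (k1/(ρ*ρ₋) + k2²(ρ*+ρ₋)/(2μ)) )(ρ* - ρ₋) satisfies lim_{k1,k2→0} u* = (sqrt(ρ₋)u₋ + sqrt(ρ₊)u₊)/(sqrt(ρ₋) + sqrt(ρ₊)). -/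
open Filter

/-- The intermediate velocity u* = u₋ - √((1/(ρ*ρ₋))(k1/(ρ*ρ₋)+k2²(ρ*+ρ₋)/(2μ)))(ρ*-ρ₋)
    tends to σ = (√ρ₋ u₋ + √ρ₊ u₊)/(√ρ₋ + √ρ₊) as (k1,k2) → (0⁺,0⁺). -/
theorem limit_intermediate_velocity (μ ρm ρp um up : ℝ)
    (hμ : 0 < μ) (hρm : 0 < ρm) (hρp : 0 < ρp) (hu : up < um)
    (ρstar : ℝ → ℝ → ℝ)
    (hpos : ∀ k1 k2 : ℝ, 0 < k1 → 0 < k2 → max ρm ρp < ρstar k1 k2)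
    (hblow : Tendsto (fun p : ℝ × ℝ => ρstar p.1 p.2)
      ((nhdsWithin 0 (Set.Ioi 0)) ×ˢ (nhdsWithin 0 (Set.Ioi 0))) atTop)
    (hk2rho : Tendsto (fun p : ℝ × ℝ => p.2 ^ 2 * (ρstar p.1 p.2) ^ 2)
      ((nhdsWithin 0 (Set.Ioi 0)) ×ˢ (nhdsWithin 0 (Set.Ioi 0)))
      (nhds (2 * μ * ρm * ρp * (um - up) ^ 2 /
        (Real.sqrt ρm + Real.sqrt ρp) ^ 2))) :
    Tendsto (fun p : ℝ × ℝ => um -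
        Real.sqrt ((1 / (ρstar p.1 p.2 * ρm)) *
          (p.1 / (ρstar p.1 p.2 * ρm) +
            p.2 ^ 2 * (ρstar p.1 p.2 + ρm) / (2 * μ))) * (ρstar p.1 p.2 - ρm))
      ((nhdsWithin 0 (Set.Ioi 0)) ×ˢ (nhdsWithin 0 (Set.Ioi 0)))
      (nhds ((Real.sqrt ρm * um + Real.sqrt ρp * up) /
        (Real.sqrt ρm + Real.sqrt ρp))) := by
  set l := (nhdsWithin (0:ℝ) (Set.Ioi 0)) ×ˢ (nhdsWithin (0:ℝ) (Set.Ioi 0)) with hl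
  set R : ℝ × ℝ → ℝ := fun p => ρstar p.1 p.2 with hRdef
  have hsρm : (0:ℝ) < Real.sqrt ρm := Real.sqrt_pos.mpr hρm
  have hsρp : (0:ℝ) < Real.sqrt ρp := Real.sqrt_pos.mpr hρp
  have hs : 0 < Real.sqrt ρm + Real.sqrt ρp := by linarith
  have hmem : ∀ᶠ p : ℝ × ℝ in l, 0 < p.1 ∧ 0 < p.2 := by
    have h1 : ∀ᶠ x : ℝ in nhdsWithin 0 (Set.Ioi 0), 0 < x := eventually_mem_nhdsWithin
    exact (h1.prod_inl _).and (h1.prod_inr _)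
  have hRgt : ∀ᶠ p : ℝ × ℝ in l, ρm < R p := by
    filter_upwards [hmem] with p hp
    exact lt_of_le_of_lt (le_max_left _ _) (hpos p.1 p.2 hp.1 hp.2)
  have hk1 : Tendsto (fun p : ℝ × ℝ => p.1) l (nhds 0) :=
    tendsto_fst.mono_right nhdsWithin_le_nhds
  have ht : Tendsto (fun p : ℝ × ℝ => (R p)⁻¹) l (nhds 0) :=
    hblow.inv_tendsto_atTop
  set V : ℝ := ρp * (um - up) ^ 2 / (Real.sqrt ρm + Real.sqrt ρp) ^ 2 with hV
  -- limit of the auxiliary expression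
  have hg : Tendsto (fun p : ℝ × ℝ =>
      p.1 * (1 - ρm * (R p)⁻¹) ^ 2 / ρm ^ 2 +
        (p.2 ^ 2 * (R p) ^ 2) *
          ((1 + ρm * (R p)⁻¹) * (1 - ρm * (R p)⁻¹) ^ 2) / (2 * μ * ρm))
      l (nhds V) := by
    have hbase : Tendsto (fun p : ℝ × ℝ =>
        p.1 * (1 - ρm * (R p)⁻¹) ^ 2 / ρm ^ 2 +
          (p.2 ^ 2 * (R p) ^ 2) *
            ((1 + ρm * (R p)⁻¹) * (1 - ρm * (R p)⁻¹) ^ 2) / (2 * μ * ρm))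
        l (nhds (0 * ((1:ℝ) - ρm * 0) ^ 2 / ρm ^ 2 +
          (2 * μ * ρm * ρp * (um - up) ^ 2 / (Real.sqrt ρm + Real.sqrt ρp) ^ 2) *
            ((1 + ρm * 0) * (1 - ρm * 0) ^ 2) / (2 * μ * ρm))) :=
      ((hk1.mul
        (((tendsto_const_nhds.sub (tendsto_const_nhds.mul ht)).pow 2))).div_const (ρm ^ 2)).add
      ((hk2rho.mul
        (((tendsto_const_nhds.add (tendsto_const_nhds.mul ht)).mul
          ((tendsto_const_nhds.sub (tendsto_const_nhds.mul ht)).pow 2)))).div_const (2 * μ * ρm))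
    have hval : 0 * ((1:ℝ) - ρm * 0) ^ 2 / ρm ^ 2 +
        (2 * μ * ρm * ρp * (um - up) ^ 2 / (Real.sqrt ρm + Real.sqrt ρp) ^ 2) *
          ((1 + ρm * 0) * (1 - ρm * 0) ^ 2) / (2 * μ * ρm) = V := by
      rw [hV]
      field_simp
      ring
    rw [← hval]
    exact hbase
  have hsqV : Real.sqrt V = Real.sqrt ρp * (um - up) / (Real.sqrt ρm + Real.sqrt ρp) := by
    have h1 : V = (Real.sqrt ρp * (um - up) / (Real.sqrt ρm + Real.sqrt ρp)) ^ 2 := by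
      rw [div_pow, mul_pow, Real.sq_sqrt hρp.le]
    rw [h1, Real.sqrt_sq]
    exact div_nonneg (mul_nonneg hsρp.le (by linarith)) hs.le
  have hsq : Tendsto (fun p : ℝ × ℝ => um - Real.sqrt
      (p.1 * (1 - ρm * (R p)⁻¹) ^ 2 / ρm ^ 2 +
        (p.2 ^ 2 * (R p) ^ 2) *
          ((1 + ρm * (R p)⁻¹) * (1 - ρm * (R p)⁻¹) ^ 2) / (2 * μ * ρm)))
      l (nhds ((Real.sqrt ρm * um + Real.sqrt ρp * up) /
        (Real.sqrt ρm + Real.sqrt ρp))) := by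
    have h2 : um - Real.sqrt V = (Real.sqrt ρm * um + Real.sqrt ρp * up) /
        (Real.sqrt ρm + Real.sqrt ρp) := by
      rw [hsqV]
      field_simp
      ring
    rw [← h2]
    exact tendsto_const_nhds.sub (Real.continuous_sqrt.continuousAt.tendsto.comp hg)
  refine hsq.congr' ?_
  filter_upwards [hmem, hRgt] with p hp hRp
  have hR0 : 0 < R p := lt_trans hρm hRp
  have hRne : R p ≠ 0 := ne_of_gt hR0
  have hF : 0 ≤ (1 / (R p * ρm)) *
      (p.1 / (R p * ρm) + p.2 ^ 2 * (R p + ρm) / (2 * μ)) := by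
    have h1 := hp.1
    have h2 := hp.2
    positivity
  have hsub : 0 ≤ R p - ρm := by linarith
  have key : (1 / (R p * ρm)) *
      (p.1 / (R p * ρm) + p.2 ^ 2 * (R p + ρm) / (2 * μ)) * (R p - ρm) ^ 2 =
      p.1 * (1 - ρm * (R p)⁻¹) ^ 2 / ρm ^ 2 +
        (p.2 ^ 2 * (R p) ^ 2) *
          ((1 + ρm * (R p)⁻¹) * (1 - ρm * (R p)⁻¹) ^ 2) / (2 * μ * ρm) := by
    field_simp
  rw [← key, Real.sqrt_mul hF, Real.sqrt_sq hsub]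
end

section
/- Under the same assumptions, the 1-shock speed σ1 = u₋ - ρ* sqrt( (1/(ρ*ρ₋)) (k1/(ρ*ρ₋) + k2²(ρ*+ρ₋)/(2μ)) ) and the 2-shock speed σ2 = u* + ρ₊ sqrt( (1/(ρ₊ρ*)) (k1/(ρ₊ρ*) + k2²(ρ₊+ρ*)/(2μ)) ) both converge, as k1, k2 → 0, to σ = (sqrt(ρ₋)u₋ + sqrt(ρ₊)u₊)/(sqrt(ρ₋) + sqrt(ρ₊)). -/
open Filter

/-- The shock speeds σ1 and σ2 both tend to
    σ = (√ρ₋ u₋ + √ρ₊ u₊)/(√ρ₋ + √ρ₊) as (k1,k2) → (0⁺,0⁺). -/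
theorem limit_shock_speeds (μ ρm ρp um up : ℝ)
    (hμ : 0 < μ) (hρm : 0 < ρm) (hρp : 0 < ρp) (hu : up < um)
    (ρstar ustar : ℝ → ℝ → ℝ)
    (hpos : ∀ k1 k2 : ℝ, 0 < k1 → 0 < k2 → max ρm ρp < ρstar k1 k2)
    (hblow : Tendsto (fun p : ℝ × ℝ => ρstar p.1 p.2)
      ((nhdsWithin 0 (Set.Ioi 0)) ×ˢ (nhdsWithin 0 (Set.Ioi 0))) atTop)
    (hk2rho : Tendsto (fun p : ℝ × ℝ => p.2 ^ 2 * (ρstar p.1 p.2) ^ 2)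
      ((nhdsWithin 0 (Set.Ioi 0)) ×ˢ (nhdsWithin 0 (Set.Ioi 0)))
      (nhds (2 * μ * ρm * ρp * (um - up) ^ 2 /
        (Real.sqrt ρm + Real.sqrt ρp) ^ 2)))
    (hustar : Tendsto (fun p : ℝ × ℝ => ustar p.1 p.2)
      ((nhdsWithin 0 (Set.Ioi 0)) ×ˢ (nhdsWithin 0 (Set.Ioi 0)))
      (nhds ((Real.sqrt ρm * um + Real.sqrt ρp * up) /
        (Real.sqrt ρm + Real.sqrt ρp)))) :
    Tendsto (fun p : ℝ × ℝ => um - ρstar p.1 p.2 *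
        Real.sqrt ((1 / (ρstar p.1 p.2 * ρm)) *
          (p.1 / (ρstar p.1 p.2 * ρm) +
            p.2 ^ 2 * (ρstar p.1 p.2 + ρm) / (2 * μ))))
      ((nhdsWithin 0 (Set.Ioi 0)) ×ˢ (nhdsWithin 0 (Set.Ioi 0)))
      (nhds ((Real.sqrt ρm * um + Real.sqrt ρp * up) /
        (Real.sqrt ρm + Real.sqrt ρp))) ∧
    Tendsto (fun p : ℝ × ℝ => ustar p.1 p.2 + ρp *
        Real.sqrt ((1 / (ρp * ρstar p.1 p.2)) *
          (p.1 / (ρp * ρstar p.1 p.2) +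
            p.2 ^ 2 * (ρp + ρstar p.1 p.2) / (2 * μ))))
      ((nhdsWithin 0 (Set.Ioi 0)) ×ˢ (nhdsWithin 0 (Set.Ioi 0)))
      (nhds ((Real.sqrt ρm * um + Real.sqrt ρp * up) /
        (Real.sqrt ρm + Real.sqrt ρp))) := by
  set F := (nhdsWithin (0:ℝ) (Set.Ioi 0)) ×ˢ (nhdsWithin (0:ℝ) (Set.Ioi 0)) with hF
  have hsm : 0 < Real.sqrt ρm := Real.sqrt_pos.2 hρm
  have hsp : 0 < Real.sqrt ρp := Real.sqrt_pos.2 hρp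
  have hspos : (0:ℝ) < Real.sqrt ρm + Real.sqrt ρp := by linarith
  set L := 2 * μ * ρm * ρp * (um - up) ^ 2 / (Real.sqrt ρm + Real.sqrt ρp) ^ 2 with hL
  -- basic limits
  have hk1 : Tendsto (fun p : ℝ × ℝ => p.1) F (nhds 0) :=
    tendsto_fst.mono_right nhdsWithin_le_nhds
  have hAinv : Tendsto (fun p : ℝ × ℝ => (ρstar p.1 p.2)⁻¹) F (nhds 0) :=
    hblow.inv_tendsto_atTop
  have hev : ∀ᶠ p : ℝ × ℝ in F, 0 < p.1 ∧ 0 < p.2 := by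
    filter_upwards [Filter.prod_mem_prod self_mem_nhdsWithin self_mem_nhdsWithin] with p hp
    exact ⟨hp.1, hp.2⟩
  have hApos : ∀ᶠ p : ℝ × ℝ in F, 0 < ρstar p.1 p.2 := by
    filter_upwards [hev] with p hp
    exact lt_trans (lt_of_lt_of_le hρm (le_max_left _ _)) (hpos _ _ hp.1 hp.2)
  constructor
  · -- 1-shock speed
    set g : ℝ × ℝ → ℝ := fun p =>
      p.1 * (ρm⁻¹) ^ 2 + (p.2 ^ 2 * (ρstar p.1 p.2) ^ 2) *
        ((1 + ρm * (ρstar p.1 p.2)⁻¹) * (2 * μ * ρm)⁻¹) with hg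
    have heq : (fun p : ℝ × ℝ => um - ρstar p.1 p.2 *
        Real.sqrt ((1 / (ρstar p.1 p.2 * ρm)) *
          (p.1 / (ρstar p.1 p.2 * ρm) +
            p.2 ^ 2 * (ρstar p.1 p.2 + ρm) / (2 * μ)))) =ᶠ[F]
        (fun p => um - Real.sqrt (g p)) := by
      filter_upwards [hApos] with p hA
      have h1 : ρstar p.1 p.2 * Real.sqrt ((1 / (ρstar p.1 p.2 * ρm)) *
          (p.1 / (ρstar p.1 p.2 * ρm) +
            p.2 ^ 2 * (ρstar p.1 p.2 + ρm) / (2 * μ))) =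
          Real.sqrt ((ρstar p.1 p.2) ^ 2 * ((1 / (ρstar p.1 p.2 * ρm)) *
          (p.1 / (ρstar p.1 p.2 * ρm) +
            p.2 ^ 2 * (ρstar p.1 p.2 + ρm) / (2 * μ)))) := by
        rw [Real.sqrt_mul (sq_nonneg _), Real.sqrt_sq hA.le]
      have h2 : (ρstar p.1 p.2) ^ 2 * ((1 / (ρstar p.1 p.2 * ρm)) *
          (p.1 / (ρstar p.1 p.2 * ρm) +
            p.2 ^ 2 * (ρstar p.1 p.2 + ρm) / (2 * μ))) = g p := by
        simp only [hg]
        field_simp [hg, hA.ne', hρm.ne', hμ.ne']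
      rw [h1, h2]
    have hglim : Tendsto g F (nhds (0 * (ρm⁻¹) ^ 2 + L * ((1 + ρm * 0) * (2 * μ * ρm)⁻¹))) := by
      exact (hk1.mul_const _).add (hk2rho.mul
        (((tendsto_const_nhds.add (hAinv.const_mul ρm)).mul_const _)))
    have hval : um - Real.sqrt (0 * (ρm⁻¹) ^ 2 + L * ((1 + ρm * 0) * (2 * μ * ρm)⁻¹)) =
        (Real.sqrt ρm * um + Real.sqrt ρp * up) / (Real.sqrt ρm + Real.sqrt ρp) := by
      have e1 : 0 * (ρm⁻¹) ^ 2 + L * ((1 + ρm * 0) * (2 * μ * ρm)⁻¹) =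
          (Real.sqrt ρp * (um - up) / (Real.sqrt ρm + Real.sqrt ρp)) ^ 2 := by
        rw [hL]
        have : (Real.sqrt ρp) ^ 2 = ρp := Real.sq_sqrt hρp.le
        rw [div_pow, mul_pow, this]
        field_simp
        ring
      rw [e1, Real.sqrt_sq (div_nonneg (mul_nonneg hsp.le (by linarith)) hspos.le)]
      field_simp
      ring
    refine Tendsto.congr' heq.symm ?_
    rw [← hval]
    exact tendsto_const_nhds.sub hglim.sqrt
  · -- 2-shock speed
    set g : ℝ × ℝ → ℝ := fun p =>
      p.1 * ((ρstar p.1 p.2)⁻¹) ^ 2 + (p.2 ^ 2 * (ρstar p.1 p.2) ^ 2) *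
        (ρp * (ρp * ((ρstar p.1 p.2)⁻¹) ^ 3 + ((ρstar p.1 p.2)⁻¹) ^ 2) * (2 * μ)⁻¹) with hg
    have heq : (fun p : ℝ × ℝ => ustar p.1 p.2 + ρp *
        Real.sqrt ((1 / (ρp * ρstar p.1 p.2)) *
          (p.1 / (ρp * ρstar p.1 p.2) +
            p.2 ^ 2 * (ρp + ρstar p.1 p.2) / (2 * μ)))) =ᶠ[F]
        (fun p => ustar p.1 p.2 + Real.sqrt (g p)) := by
      filter_upwards [hApos] with p hA
      have h1 : ρp * Real.sqrt ((1 / (ρp * ρstar p.1 p.2)) *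
          (p.1 / (ρp * ρstar p.1 p.2) +
            p.2 ^ 2 * (ρp + ρstar p.1 p.2) / (2 * μ))) =
          Real.sqrt (ρp ^ 2 * ((1 / (ρp * ρstar p.1 p.2)) *
          (p.1 / (ρp * ρstar p.1 p.2) +
            p.2 ^ 2 * (ρp + ρstar p.1 p.2) / (2 * μ)))) := by
        rw [Real.sqrt_mul (sq_nonneg _), Real.sqrt_sq hρp.le]
      have h2 : ρp ^ 2 * ((1 / (ρp * ρstar p.1 p.2)) *
          (p.1 / (ρp * ρstar p.1 p.2) +
            p.2 ^ 2 * (ρp + ρstar p.1 p.2) / (2 * μ))) = g p := by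
        simp only [hg]
        field_simp [hg, hA.ne', hρp.ne', hμ.ne']
      rw [h1, h2]
    have hglim : Tendsto g F (nhds 0) := by
      have h1 := hk1.mul (hAinv.pow 2)
      have hz := ((((hAinv.pow 3).const_mul ρp).add (hAinv.pow 2)).const_mul ρp).mul_const
        (2 * μ)⁻¹
      have hsum := h1.add (hk2rho.mul hz)
      rw [hg, show (0:ℝ) = 0 * 0 ^ 2 + L * (ρp * (ρp * 0 ^ 3 + 0 ^ 2) * (2 * μ)⁻¹) by norm_num]
      exact hsum
    refine Tendsto.congr' heq.symm ?_
    have : Tendsto (fun p : ℝ × ℝ => ustar p.1 p.2 + Real.sqrt (g p)) F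
        (nhds ((Real.sqrt ρm * um + Real.sqrt ρp * up) /
          (Real.sqrt ρm + Real.sqrt ρp) + Real.sqrt 0)) := hustar.add hglim.sqrt
    simpa only [Real.sqrt_zero, add_zero] using this
end

section
/- Under the same assumptions, lim_{k1,k2→0} (σ2 - σ1) ρ* = σ(ρ₊ - ρ₋) - (ρ₊u₊ - ρ₋u₋) = sqrt(ρ₋ρ₊)(u₋ - u₊) > 0; equivalently, the mass ∫_{σ1 t}^{σ2 t} ρ* dx concentrated between the two shocks converges to w(t) = sqrt(ρ₋ρ₊)(u₋ - u₊) t, the weight of the limiting delta shock. -/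
open Filter intervalIntegral

/-- Concentration of mass between the two shocks:
    (σ2 - σ1)ρ* → σ(ρ₊-ρ₋) - (ρ₊u₊-ρ₋u₋) = √(ρ₋ρ₊)(u₋-u₊) > 0 as (k1,k2) → (0⁺,0⁺);
    equivalently ∫_{σ1 t}^{σ2 t} ρ* dx → w(t) = √(ρ₋ρ₊)(u₋-u₊) t for t ≥ 0. -/
theorem limit_mass_concentration (μ ρm ρp um up : ℝ)
    (hμ : 0 < μ) (hρm : 0 < ρm) (hρp : 0 < ρp) (hu : up < um)
    (ρstar ustar σ1 σ2 : ℝ → ℝ → ℝ)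
    (σ : ℝ)
    (hσ : σ = (Real.sqrt ρm * um + Real.sqrt ρp * up) /
      (Real.sqrt ρm + Real.sqrt ρp))
    (hRH1 : ∀ k1 k2 : ℝ, 0 < k1 → 0 < k2 →
      σ1 k1 k2 * (ρstar k1 k2 - ρm) = ρstar k1 k2 * ustar k1 k2 - ρm * um)
    (hRH2 : ∀ k1 k2 : ℝ, 0 < k1 → 0 < k2 →
      σ2 k1 k2 * (ρp - ρstar k1 k2) = ρp * up - ρstar k1 k2 * ustar k1 k2)
    (hσ1 : Tendsto (fun p : ℝ × ℝ => σ1 p.1 p.2)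
      ((nhdsWithin 0 (Set.Ioi 0)) ×ˢ (nhdsWithin 0 (Set.Ioi 0))) (nhds σ))
    (hσ2 : Tendsto (fun p : ℝ × ℝ => σ2 p.1 p.2)
      ((nhdsWithin 0 (Set.Ioi 0)) ×ˢ (nhdsWithin 0 (Set.Ioi 0))) (nhds σ))
    (hustar : Tendsto (fun p : ℝ × ℝ => ustar p.1 p.2)
      ((nhdsWithin 0 (Set.Ioi 0)) ×ˢ (nhdsWithin 0 (Set.Ioi 0))) (nhds σ))
    (hblow : Tendsto (fun p : ℝ × ℝ => ρstar p.1 p.2)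
      ((nhdsWithin 0 (Set.Ioi 0)) ×ˢ (nhdsWithin 0 (Set.Ioi 0))) atTop) :
    (Tendsto (fun p : ℝ × ℝ => (σ2 p.1 p.2 - σ1 p.1 p.2) * ρstar p.1 p.2)
      ((nhdsWithin 0 (Set.Ioi 0)) ×ˢ (nhdsWithin 0 (Set.Ioi 0)))
      (nhds (Real.sqrt (ρm * ρp) * (um - up)))) ∧
    σ * (ρp - ρm) - (ρp * up - ρm * um) = Real.sqrt (ρm * ρp) * (um - up) ∧
    0 < Real.sqrt (ρm * ρp) * (um - up) ∧
    (∀ t : ℝ, 0 ≤ t →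
      Tendsto (fun p : ℝ × ℝ => ∫ _x in (σ1 p.1 p.2 * t)..(σ2 p.1 p.2 * t), ρstar p.1 p.2)
        ((nhdsWithin 0 (Set.Ioi 0)) ×ˢ (nhdsWithin 0 (Set.Ioi 0)))
        (nhds (Real.sqrt (ρm * ρp) * (um - up) * t))) := by
  set a := Real.sqrt ρm with ha
  set b := Real.sqrt ρp with hb
  have ha0 : 0 < a := Real.sqrt_pos.mpr hρm
  have hb0 : 0 < b := Real.sqrt_pos.mpr hρp
  have ha2 : a ^ 2 = ρm := Real.sq_sqrt hρm.le
  have hb2 : b ^ 2 = ρp := Real.sq_sqrt hρp.le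
  have hab : Real.sqrt (ρm * ρp) = a * b := Real.sqrt_mul hρm.le ρp
  have hident : σ * (ρp - ρm) - (ρp * up - ρm * um) = Real.sqrt (ρm * ρp) * (um - up) := by
    rw [hab, hσ, div_mul_eq_mul_div, div_sub' (by positivity),
      div_eq_iff (by positivity : a + b ≠ 0)]
    rw [← ha2, ← hb2]; ring
  have hpos : 0 < Real.sqrt (ρm * ρp) * (um - up) := by
    rw [hab]; exact mul_pos (mul_pos ha0 hb0) (sub_pos.mpr hu)
  set L := (nhdsWithin (0:ℝ) (Set.Ioi 0)) ×ˢ (nhdsWithin (0:ℝ) (Set.Ioi 0)) with hL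
  have hev : ∀ᶠ p : ℝ × ℝ in L, 0 < p.1 ∧ 0 < p.2 := by
    filter_upwards [Filter.prod_mem_prod self_mem_nhdsWithin self_mem_nhdsWithin] with p hp
    exact hp
  have key : Tendsto (fun p : ℝ × ℝ => (σ2 p.1 p.2 - σ1 p.1 p.2) * ρstar p.1 p.2) L
      (nhds (Real.sqrt (ρm * ρp) * (um - up))) := by
    have heq : ∀ᶠ p : ℝ × ℝ in L,
        σ2 p.1 p.2 * ρp - σ1 p.1 p.2 * ρm - (ρp * up - ρm * um)
          = (σ2 p.1 p.2 - σ1 p.1 p.2) * ρstar p.1 p.2 := by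
      filter_upwards [hev] with p hp
      have h1 := hRH1 p.1 p.2 hp.1 hp.2
      have h2 := hRH2 p.1 p.2 hp.1 hp.2
      nlinarith [h1, h2]
    have hlim : Tendsto (fun p : ℝ × ℝ =>
        σ2 p.1 p.2 * ρp - σ1 p.1 p.2 * ρm - (ρp * up - ρm * um)) L
        (nhds (σ * ρp - σ * ρm - (ρp * up - ρm * um))) :=
      ((hσ2.mul_const ρp).sub (hσ1.mul_const ρm)).sub tendsto_const_nhds
    have : σ * ρp - σ * ρm - (ρp * up - ρm * um) = Real.sqrt (ρm * ρp) * (um - up) := by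
      rw [← hident]; ring
    rw [this] at hlim
    exact hlim.congr' heq
  refine ⟨key, hident, hpos, fun t ht => ?_⟩
  have heq : ∀ p : ℝ × ℝ,
      (∫ _x in (σ1 p.1 p.2 * t)..(σ2 p.1 p.2 * t), ρstar p.1 p.2)
        = ((σ2 p.1 p.2 - σ1 p.1 p.2) * ρstar p.1 p.2) * t := by
    intro p
    rw [intervalIntegral.integral_const, smul_eq_mul]
    ring
  simp only [heq]
  exact key.mul_const t
end

section
/- Fix ρ₋, ρ₊ > 0, μ > 0, and u₋ < u₊. Suppose for each k1, k2 > 0 there exists ρ* = ρ*(k1,k2) with 0 < ρ* ≤ min(ρ₋, ρ₊) satisfying u₊ - u₋ = ∫_{ρ*}^{ρ₋} sqrt(k1/s² + k2²s/μ)/s ds + ∫_{ρ*}^{ρ₊} sqrt(k1/s² + k2²s/μ)/s ds. Then ρ*(k1,k2) → 0 as (k1,k2) → (0,0); i.e., a vacuum forms in the limit. -/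
open Filter intervalIntegral

lemma int_bound_aux (μ M k1 k2 ε r b : ℝ) (hμ : 0 < μ) (hk1 : 0 ≤ k1)
    (hε : 0 < ε) (hεr : ε ≤ r) (hrb : r ≤ b) (hbM : b ≤ M)  (_hr : 0 < r) :
    (∫ s in r..b, Real.sqrt (k1 / s ^ 2 + k2 ^ 2 * s / μ) / s) ≤
      Real.sqrt (k1 / ε ^ 2 + k2 ^ 2 * M / μ) / ε * b := by
  set C := Real.sqrt (k1 / ε ^ 2 + k2 ^ 2 * M / μ) / ε with hC
  have hC0 : 0 ≤ C := div_nonneg (Real.sqrt_nonneg _) hε.le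
  have hbound : ‖∫ s in r..b, Real.sqrt (k1 / s ^ 2 + k2 ^ 2 * s / μ) / s‖ ≤ C * |b - r| := by
    apply intervalIntegral.norm_integral_le_of_norm_le_const
    intro x hx
    rw [Set.uIoc_of_le hrb] at hx
    obtain ⟨hx1, hx2⟩ := hx
    have hx0 : 0 < x := lt_of_le_of_lt (hε.le.trans hεr) hx1
    rw [Real.norm_eq_abs, abs_of_nonneg (div_nonneg (Real.sqrt_nonneg _) hx0.le)]
    have hεx : ε ≤ x := hεr.trans hx1.le
    apply div_le_div₀ (Real.sqrt_nonneg _) _ hε hεx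
    apply Real.sqrt_le_sqrt
    gcongr
    exact hx2.trans hbM
  calc (∫ s in r..b, Real.sqrt (k1 / s ^ 2 + k2 ^ 2 * s / μ) / s)
      ≤ ‖∫ s in r..b, Real.sqrt (k1 / s ^ 2 + k2 ^ 2 * s / μ) / s‖ := le_abs_self _
    _ ≤ C * |b - r| := hbound
    _ ≤ C * b := by
        apply mul_le_mul_of_nonneg_left _ hC0
        rw [abs_of_nonneg (sub_nonneg.mpr hrb)]
        linarith

/-- Vacuum formation: the intermediate density of the two-rarefaction Riemann
    solution tends to 0 as (k1,k2) → (0⁺,0⁺). -/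
theorem vacuum_formation (μ ρm ρp um up : ℝ)
    (hμ : 0 < μ) (hρm : 0 < ρm) (hρp : 0 < ρp) (hu : um < up)
    (ρstar : ℝ → ℝ → ℝ)
    (hρstar : ∀ k1 k2 : ℝ, 0 < k1 → 0 < k2 →
      0 < ρstar k1 k2 ∧ ρstar k1 k2 ≤ min ρm ρp ∧
      up - um =
        (∫ s in (ρstar k1 k2)..ρm, Real.sqrt (k1 / s ^ 2 + k2 ^ 2 * s / μ) / s) +
        (∫ s in (ρstar k1 k2)..ρp, Real.sqrt (k1 / s ^ 2 + k2 ^ 2 * s / μ) / s)) :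
    Tendsto (fun p : ℝ × ℝ => ρstar p.1 p.2)
      ((nhdsWithin 0 (Set.Ioi 0)) ×ˢ (nhdsWithin 0 (Set.Ioi 0))) (nhds 0) := by
  rw [Metric.tendsto_nhds]
  intro ε hε
  set M := max ρm ρp with hM
  have hM0 : 0 < M := lt_max_of_lt_left hρm
  set F : ℝ × ℝ → ℝ :=
    fun p => Real.sqrt (p.1 / ε ^ 2 + p.2 ^ 2 * M / μ) / ε * (ρm + ρp) with hFdef
  have hFcont : Continuous F := by
    apply Continuous.mul _ continuous_const
    apply Continuous.div _ continuous_const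
    · exact fun _ => hε.ne'
    · exact (Continuous.add (continuous_fst.div_const _)
        (((continuous_snd.pow 2).mul continuous_const).div_const _)).sqrt
  have hF0 : F (0, 0) = 0 := by simp [hFdef]
  have hle : (nhdsWithin (0:ℝ) (Set.Ioi 0)) ×ˢ (nhdsWithin (0:ℝ) (Set.Ioi 0)) ≤
      nhds ((0:ℝ), (0:ℝ)) := by
    rw [nhds_prod_eq]
    exact Filter.prod_mono nhdsWithin_le_nhds nhdsWithin_le_nhds
  have hFt : Tendsto F ((nhdsWithin (0:ℝ) (Set.Ioi 0)) ×ˢ (nhdsWithin (0:ℝ) (Set.Ioi 0)))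
      (nhds 0) := by
    have := hFcont.tendsto (0, 0)
    rw [hF0] at this
    exact this.mono_left hle
  have hFlt : ∀ᶠ p in (nhdsWithin (0:ℝ) (Set.Ioi 0)) ×ˢ (nhdsWithin (0:ℝ) (Set.Ioi 0)),
      F p < up - um := hFt.eventually_lt_const (by linarith)
  have h1 : ∀ᶠ p in (nhdsWithin (0:ℝ) (Set.Ioi 0)) ×ˢ (nhdsWithin (0:ℝ) (Set.Ioi 0)),
      0 < p.1 ∧ 0 < p.2 := by
    apply Filter.mem_prod_iff.mpr
    exact ⟨Set.Ioi 0, self_mem_nhdsWithin, Set.Ioi 0, self_mem_nhdsWithin,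
      fun p hp => ⟨hp.1, hp.2⟩⟩
  filter_upwards [hFlt, h1] with p hFp hpos
  obtain ⟨hp1, hp2⟩ := hpos
  obtain ⟨hρ0, hρle, heq⟩ := hρstar p.1 p.2 hp1 hp2
  rw [Real.dist_eq, sub_zero, abs_of_pos hρ0]
  by_contra hcon
  push_neg at hcon
  set r := ρstar p.1 p.2
  have hrm : r ≤ ρm := hρle.trans (min_le_left _ _)
  have hrp : r ≤ ρp := hρle.trans (min_le_right _ _)
  have hI1 := int_bound_aux μ M p.1 p.2 ε r ρm hμ hp1.le hε hcon hrm (le_max_left _ _) hρ0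
  have hI2 := int_bound_aux μ M p.1 p.2 ε r ρp hμ hp1.le hε hcon hrp (le_max_right _ _) hρ0
  have : up - um ≤ F p := by
    rw [heq, hFdef]
    have := add_le_add hI1 hI2
    nlinarith [Real.sqrt_nonneg (p.1 / ε ^ 2 + p.2 ^ 2 * M / μ)]
  linarith
end
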